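/- arXiv:2404.18422 — 8 statements merged into one kernel-verified Lean document; each statement's English description precedes it below -/
import Mathlib

section
/- Let w ∈ ℂ with Im(w) ≠ 0, let u_w(x) = x - w and u(x) = x - i. Then for every n ∈ ℕ, the n-th derivative of the function x ↦ u_w(x)^{-1} u(x)^n equals x ↦ (w-i)^n (-1)^n n! · u_w(x)^{-(n+1)} on ℝ. -/
open Complex

/-! Since `x - i = (x - w) + (w - i)`, we have `u_w⁻¹ u^(n+1) = u^n + (w - i) u_w⁻¹ u^n`. The
polynomial `u^n` is killed by `n + 1` derivatives, so the `(n+1)`-st derivative of the left side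
is `w - i` times the derivative of the `n`-th derivative of `u_w⁻¹ u^n`, and induction on `n`
concludes. -/

lemma ofReal_sub_ne_zero_of_im_ne_zero {w : ℂ} (hw : w.im ≠ 0) (x : ℝ) : (x : ℂ) - w ≠ 0 :=
  sub_ne_zero.2 fun h => hw (by simpa using congrArg im h.symm)

@[fun_prop]
lemma contDiff_ofReal {n : WithTop ℕ∞} : ContDiff ℝ n ((↑) : ℝ → ℂ) :=
  ofRealCLM.contDiff

lemma hasDerivAt_ofReal_sub (c : ℂ) (x : ℝ) : HasDerivAt (fun x : ℝ => (x : ℂ) - c) 1 x :=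
  (hasDerivAt_id x).ofReal_comp.sub_const c

lemma deriv_ofReal_sub_pow (c : ℂ) (k : ℕ) :
    deriv (fun x : ℝ => ((x : ℂ) - c) ^ k) = fun x : ℝ => k * ((x : ℂ) - c) ^ (k - 1) := by
  funext x
  simpa using ((hasDerivAt_ofReal_sub c x).fun_pow k).deriv

lemma deriv_inv_ofReal_sub_pow {w : ℂ} (hw : w.im ≠ 0) (k : ℕ) :
    deriv (fun x : ℝ => (((x : ℂ) - w) ^ k)⁻¹) =
      fun x : ℝ => -k * (((x : ℂ) - w) ^ (k + 1))⁻¹ := by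
  funext x
  have hx := ofReal_sub_ne_zero_of_im_ne_zero hw x
  rw [(((hasDerivAt_ofReal_sub w x).fun_pow k).fun_inv (pow_ne_zero k hx)).deriv]
  rcases k with _ | k
  · simp
  · rw [Nat.add_sub_cancel]
    field_simp
    ring

lemma iteratedDeriv_ofReal_sub_pow_of_lt (c : ℂ) {n d : ℕ} (h : d < n) :
    iteratedDeriv n (fun x : ℝ => ((x : ℂ) - c) ^ d) = 0 := by
  induction n generalizing d with
  | zero => omega
  | succ n ih =>
    funext x
    rcases d with _ | d
    · simp [iteratedDeriv_const]
    · rw [iteratedDeriv_succ', deriv_ofReal_sub_pow, iteratedDeriv_const_mul_field,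
        ih (by omega)]
      simp

lemma inv_mul_pow_succ {K : Type*} [Field K] {a : K} (ha : a ≠ 0) (b : K) (n : ℕ) :
    a⁻¹ * b ^ (n + 1) = b ^ n + (b - a) * (a⁻¹ * b ^ n) := by
  field_simp
  ring

/-- For `w ∈ ℂ` with `Im w ≠ 0`, `u_w(x) = x - w` and `u(x) = x - i`,
the `n`-th derivative of `x ↦ u_w(x)⁻¹ u(x)^n` equals
`x ↦ (w - i)^n (-1)^n n! · u_w(x)^{-(n+1)}` on `ℝ`. -/
theorem iteratedDeriv_inv_uw_mul_u_pow (w : ℂ) (hw : w.im ≠ 0) (n : ℕ) :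
    iteratedDeriv n (fun x : ℝ => ((x : ℂ) - w)⁻¹ * ((x : ℂ) - I) ^ n)
      = fun x : ℝ =>
          (w - I) ^ n * (-1 : ℂ) ^ n * (n.factorial : ℂ) * (((x : ℂ) - w) ^ (n + 1))⁻¹ := by
  have hu := ofReal_sub_ne_zero_of_im_ne_zero hw
  induction n with
  | zero => simp
  | succ n ih =>
    funext x
    simp_rw [inv_mul_pow_succ (hu _), sub_sub_sub_cancel_left]
    rw [iteratedDeriv_fun_add (by fun_prop) (by fun_prop (disch := exact hu x)),
      iteratedDeriv_ofReal_sub_pow_of_lt I n.lt_succ_self, Pi.zero_apply, zero_add,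
      iteratedDeriv_const_mul_field, iteratedDeriv_succ, ih, deriv_const_mul_field',
      deriv_inv_ofReal_sub_pow hw]
    push_cast [Nat.factorial_succ]
    ring
end

section
/- Let f ∈ C^n(ℝ) and define the divided differences recursively by f^{[0]} = f and f^{[n]}(λ₀,…,λₙ) = (f^{[n-1]}(λ₀,…,λ_{n-1}) - f^{[n-1]}(λ₁,…,λₙ))/(λ₀ - λₙ) for λ₀ ≠ λₙ, extended continuously. Suppose f^{(n)}(λ) = ∫_ℝ e^{ixλ} dμ(x) for a finite complex measure μ. Then for all λ₀,…,λₙ ∈ ℝ, f^{[n]}(λ₀,…,λₙ) = ∫_ℝ ∫_{Δₙ} e^{i s₀ x λ₀} ⋯ e^{i sₙ x λₙ} ds dμ(x), where Δₙ = {s ∈ ℝ_{≥0}^{n+1} : s₀ + ⋯ + sₙ = 1} carries the flat measure of total mass 1/n!. -/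
open Complex MeasureTheory Finset

/-!
For `t` in the simplex `{t ≥ 0, ∑ tᵢ ≤ 1}` let `baryComb λ t = (1 - ∑ tᵢ) λ₀ + ∑ tᵢ λᵢ₊₁`. The
Hermite–Genocchi formula `f^{[m]}(λ) = ∫ f^{(m)} (baryComb λ t) dt` is proved by induction on `m`.
Off the diagonal `λ₀ = λ_{m+1}`, slicing the simplex along its last coordinate and applying the
fundamental theorem of calculus on each fibre produces the divided-difference recursion: the lower
ends of the fibres give the face carrying `λ₀, …, λ_m`, the upper ends the face carrying
`λ₁, …, λ_{m+1}`, but with the implicit weight `1 - ∑ tᵢ` in last rather than first position.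
Moving it back is a second slicing, along the first coordinate, combined with the reflection
`u ↦ 1 - ∑ sᵢ - u` of the fibres. Both sides are continuous in `λ` and the off-diagonal set is
dense, so they agree everywhere. Finally, inserting the Fourier representation of `f^{(n)}` and
exchanging the two integrals, whose integrand is bounded by `|ρ|`, gives the product of
exponentials.
-/

namespace HermiteGenocchi

def simplex (m : ℕ) : Set (Fin m → ℝ) := {t | (∀ i, 0 ≤ t i) ∧ ∑ i, t i ≤ 1}

def baryComb {m : ℕ} (lam : Fin (m + 1) → ℝ) (t : Fin m → ℝ) : ℝ :=
  (1 - ∑ i, t i) * lam 0 + ∑ i, t i * lam i.succ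

lemma isClosed_simplex (m : ℕ) : IsClosed (simplex m) := by
  simp only [simplex, Set.ofPred_and, Set.ofPred_forall]
  exact (isClosed_iInter fun i => isClosed_le continuous_const (continuous_apply i)).inter
    (isClosed_le (continuous_finsetSum _ fun i _ => continuous_apply i) continuous_const)

lemma isCompact_simplex (m : ℕ) : IsCompact (simplex m) := by
  refine (isCompact_Icc (a := 0) (b := 1)).of_isClosed_subset (isClosed_simplex m)
    fun t ⟨h0, h1⟩ => ⟨h0, fun i => (single_le_sum (fun j _ => h0 j) (mem_univ i)).trans h1⟩

lemma measurableSet_simplex (m : ℕ) : MeasurableSet (simplex m) :=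
  (isClosed_simplex m).measurableSet

lemma _root_.Continuous.integrableOn_simplex {E : Type*} [NormedAddCommGroup E] {m : ℕ}
    {F : (Fin m → ℝ) → E} (hF : Continuous F) : IntegrableOn F (simplex m) :=
  hF.continuousOn.integrableOn_compact (isCompact_simplex m)

lemma insertNth_mem_simplex_iff {m : ℕ} (p : Fin (m + 1)) {u : ℝ} {r : Fin m → ℝ} :
    p.insertNth u r ∈ simplex (m + 1) ↔ r ∈ simplex m ∧ u ∈ Set.Icc 0 (1 - ∑ i, r i) := by
  simp only [simplex, Set.mem_ofPred_eq, Set.mem_Icc, Fin.sum_insertNth, p.forall_iff_succAbove,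
    Fin.insertNth_apply_same, Fin.insertNth_apply_succAbove]
  constructor
  · rintro ⟨⟨hu, hr⟩, hs⟩
    exact ⟨⟨hr, by linarith [sum_nonneg fun i (_ : i ∈ univ) => hr i]⟩, hu, by linarith⟩
  · rintro ⟨⟨hr, -⟩, hu, hs⟩
    exact ⟨⟨hu, hr⟩, by linarith⟩

@[fun_prop]
lemma _root_.Continuous.baryComb {X : Type*} [TopologicalSpace X] {m : ℕ} {f : X → Fin (m + 1) → ℝ}
    {g : X → Fin m → ℝ} (hf : Continuous f) (hg : Continuous g) :
    Continuous fun x => baryComb (f x) (g x) := by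
  unfold HermiteGenocchi.baryComb; fun_prop

lemma baryComb_zero (lam : Fin 1 → ℝ) (t : Fin 0 → ℝ) : baryComb lam t = lam 0 := by
  simp [baryComb]

lemma baryComb_snoc {m : ℕ} (lam : Fin (m + 2) → ℝ) (r : Fin m → ℝ) (u : ℝ) :
    baryComb lam (Fin.snoc r u) =
      baryComb (lam ∘ Fin.castSucc) r + u * (lam (Fin.last _) - lam 0) := by
  simp only [baryComb, Fin.sum_univ_castSucc, Fin.snoc_castSucc, Fin.snoc_last, Fin.succ_last,
    Function.comp_apply, Fin.castSucc_zero, Fin.succ_castSucc]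
  ring

lemma baryComb_snoc_one_sub_sum {m : ℕ} (lam : Fin (m + 2) → ℝ) (r : Fin m → ℝ) :
    baryComb lam (Fin.snoc r (1 - ∑ i, r i)) =
      ∑ j, (Fin.snoc r (1 - ∑ i, r i) : Fin (m + 1) → ℝ) j * lam j.succ := by
  simp [baryComb, Fin.sum_snoc]

lemma baryComb_eq_sum_cons {m : ℕ} (lam : Fin (m + 1) → ℝ) (t : Fin m → ℝ) :
    baryComb lam t = ∑ j, (Fin.cons (1 - ∑ i, t i) t : Fin (m + 1) → ℝ) j * lam j := by
  simp [baryComb, Fin.sum_univ_succ]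

lemma integral_simplex_succ {E : Type*} [NormedAddCommGroup E] [NormedSpace ℝ E] {m : ℕ}
    (p : Fin (m + 1)) {F : (Fin (m + 1) → ℝ) → E} (hF : IntegrableOn F (simplex (m + 1))) :
    ∫ t in simplex (m + 1), F t =
      ∫ r in simplex m, ∫ u in (0 : ℝ)..1 - ∑ i, r i, F (p.insertNth u r) := by
  set e := MeasurableEquiv.piFinSuccAbove (fun _ : Fin (m + 1) => ℝ) p
  have he : MeasurePreserving e.symm (volume.prod volume) volume :=
    (volume_preserving_piFinSuccAbove (fun _ : Fin (m + 1) => ℝ) p).symm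
  have hfiber : ∀ r : Fin m → ℝ, ∫ u, (simplex (m + 1)).indicator F (e.symm (u, r)) =
      (simplex m).indicator (fun r => ∫ u in (0 : ℝ)..1 - ∑ i, r i, F (p.insertNth u r)) r := by
    intro r
    simp only [e, MeasurableEquiv.piFinSuccAbove_symm_apply, Fin.insertNthEquiv, Equiv.coe_fn_mk]
    by_cases hr : r ∈ simplex m
    · have hsum : 0 ≤ 1 - ∑ i, r i := sub_nonneg.2 hr.2
      have hslice : (fun u => (simplex (m + 1)).indicator F (p.insertNth u r)) =
          (Set.Icc 0 (1 - ∑ i, r i)).indicator fun u => F (p.insertNth u r) := by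
        ext u
        classical
        simp only [Set.indicator_apply, insertNth_mem_simplex_iff, hr, true_and]
      rw [hslice, integral_indicator measurableSet_Icc, integral_Icc_eq_integral_Ioc,
        ← intervalIntegral.integral_of_le hsum, Set.indicator_of_mem hr]
    · simp [insertNth_mem_simplex_iff, hr]
  have hint :
      Integrable (fun q => (simplex (m + 1)).indicator F (e.symm q)) (volume.prod volume) :=
    (he.integrable_comp_emb e.symm.measurableEmbedding).2
      ((integrable_indicator_iff (measurableSet_simplex _)).2 hF)
  rw [← integral_indicator (measurableSet_simplex _), ← he.integral_comp',
    integral_prod_symm _ hint]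
  simp only [hfiber, integral_indicator (measurableSet_simplex m)]

lemma integral_simplex_cons_eq_snoc {E : Type*} [NormedAddCommGroup E] [NormedSpace ℝ E]
    {m : ℕ} {G : (Fin (m + 1) → ℝ) → E} (hG : Continuous G) :
    ∫ r in simplex m, G (Fin.cons (1 - ∑ i, r i) r) =
      ∫ r in simplex m, G (Fin.snoc r (1 - ∑ i, r i)) := by
  cases m with
  | zero =>
    congr 1 with r
    congr 1 with j
    rw [Fin.fin_one_eq_zero j]
    rfl
  | succ k =>
    have hcons : Continuous fun r : Fin (k + 1) → ℝ => G (Fin.cons (1 - ∑ i, r i) r) := by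
      fun_prop
    have hsnoc : Continuous fun r : Fin (k + 1) → ℝ => G (Fin.snoc r (1 - ∑ i, r i)) := by
      fun_prop
    rw [integral_simplex_succ (Fin.last k) hcons.integrableOn_simplex,
      integral_simplex_succ 0 hsnoc.integrableOn_simplex]
    congr 1 with s
    simp only [Fin.insertNth_last', Fin.insertNth_zero', Fin.sum_snoc, Fin.sum_cons]
    have hreflect := intervalIntegral.integral_comp_sub_left
      (fun u => G (Fin.cons (1 - (∑ i, s i + u)) (Fin.snoc s u))) (a := 0) (b := 1 - ∑ i, s i)
      (1 - ∑ i, s i)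
    rw [sub_self, sub_zero] at hreflect
    rw [← hreflect]
    congr 1 with v
    rw [Fin.cons_snoc_eq_snoc_cons, show 1 - (∑ i, s i + (1 - ∑ i, s i - v)) = v by ring,
      show 1 - ∑ i, s i - v = 1 - (v + ∑ i, s i) by ring]

lemma intervalIntegral_deriv_baryComb_snoc {m : ℕ} {h h' : ℝ → ℂ}
    (hderiv : ∀ x, HasDerivAt h (h' x) x) (hh' : Continuous h') (lam : Fin (m + 2) → ℝ)
    (hlam : lam 0 ≠ lam (Fin.last _)) (r : Fin m → ℝ) (b : ℝ) :
    ∫ u in (0 : ℝ)..b, h' (baryComb lam (Fin.snoc r u)) =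
      (h (baryComb lam (Fin.snoc r b)) - h (baryComb (lam ∘ Fin.castSucc) r)) /
        ((lam (Fin.last _) : ℂ) - lam 0) := by
  have hd : ((lam (Fin.last _) : ℂ) - lam 0) ≠ 0 := by
    exact_mod_cast sub_ne_zero.2 hlam.symm
  have hline : ∀ u, HasDerivAt (fun u => h (baryComb lam (Fin.snoc r u)))
      (h' (baryComb lam (Fin.snoc r u)) * ((lam (Fin.last _) : ℂ) - lam 0)) u := by
    intro u
    have hφ : HasDerivAt (fun u => baryComb lam (Fin.snoc r u)) (lam (Fin.last _) - lam 0) u := by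
      simp only [baryComb_snoc]
      simpa using ((hasDerivAt_id u).mul_const (lam (Fin.last _) - lam 0)).const_add
        (baryComb (lam ∘ Fin.castSucc) r)
    have := (hderiv (baryComb lam (Fin.snoc r u))).scomp u hφ
    rwa [Complex.real_smul, mul_comm, Complex.ofReal_sub] at this
  rw [eq_div_iff hd, ← intervalIntegral.integral_mul_const,
    intervalIntegral.integral_eq_sub_of_hasDerivAt (fun u _ => hline u), baryComb_snoc lam r 0,
    zero_mul, add_zero]
  exact (by fun_prop : Continuous fun u => h' (baryComb lam (Fin.snoc r u)) *
    ((lam (Fin.last _) : ℂ) - lam 0)).intervalIntegrable _ _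

theorem integral_simplex_deriv_baryComb {m : ℕ} {h h' : ℝ → ℂ}
    (hderiv : ∀ x, HasDerivAt h (h' x) x) (hh' : Continuous h') (lam : Fin (m + 2) → ℝ)
    (hlam : lam 0 ≠ lam (Fin.last _)) :
    ∫ t in simplex (m + 1), h' (baryComb lam t) =
      ((∫ r in simplex m, h (baryComb (lam ∘ Fin.castSucc) r)) -
        ∫ r in simplex m, h (baryComb (lam ∘ Fin.succ) r)) /
        ((lam 0 : ℂ) - lam (Fin.last _)) := by
  have hh : Continuous h := continuous_iff_continuousAt.2 fun x => (hderiv x).continuousAt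
  have hface : ∫ r in simplex m, h (baryComb lam (Fin.snoc r (1 - ∑ i, r i))) =
      ∫ r in simplex m, h (baryComb (lam ∘ Fin.succ) r) := by
    have hG : Continuous fun w : Fin (m + 1) → ℝ => h (∑ j, w j * lam j.succ) := by fun_prop
    simp_rw [baryComb_snoc_one_sub_sum]
    simp only [baryComb_eq_sum_cons, Function.comp_apply]
    exact (integral_simplex_cons_eq_snoc hG).symm
  rw [integral_simplex_succ (Fin.last m) (Continuous.integrableOn_simplex (by fun_prop))]
  simp only [Fin.insertNth_last', intervalIntegral_deriv_baryComb_snoc hderiv hh' lam hlam]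
  rw [integral_div, integral_sub, hface, ← neg_sub (lam 0 : ℂ), div_neg, ← neg_div, neg_sub]
  all_goals exact Continuous.integrableOn_simplex (by fun_prop)

lemma continuous_integral_simplex_baryComb {E : Type*} [NormedAddCommGroup E] [NormedSpace ℝ E]
    {m : ℕ} {h : ℝ → E} (hh : Continuous h) :
    Continuous fun lam : Fin (m + 1) → ℝ => ∫ t in simplex m, h (baryComb lam t) :=
  continuous_parametric_integral_of_continuous (by fun_prop) (isCompact_simplex m)

lemma integral_simplex_zero {E : Type*} [NormedAddCommGroup E] [NormedSpace ℝ E] [CompleteSpace E]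
    (g : (Fin 0 → ℝ) → E) : ∫ t in simplex 0, g t = g 0 := by
  have huniv : simplex 0 = Set.univ := Set.eq_univ_of_forall fun t => ⟨isEmptyElim, by simp⟩
  rw [huniv, Measure.restrict_univ, volume_pi, Measure.pi_of_empty _ 0, integral_dirac]

lemma dense_setOf_apply_ne {ι : Type*} {i j : ι} (hij : i ≠ j) :
    Dense {x : ι → ℝ | x i ≠ x j} := by
  set L : StrongDual ℝ (ι → ℝ) := ContinuousLinearMap.proj (R := ℝ) (φ := fun _ : ι => ℝ) i -
    ContinuousLinearMap.proj j
  have hL : L ≠ 0 := fun h => by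
    classical
    simpa [L, Pi.single_apply, hij.symm] using congr($h (Pi.single i 1))
  have : {x : ι → ℝ | x i ≠ x j} = L ⁻¹' {0}ᶜ := by
    ext x; simp [L, sub_eq_zero]
  rw [this]
  exact (dense_compl_singleton 0).preimage (L.isOpenMap_of_ne_zero hL)

theorem eq_integral_simplex_iteratedDeriv {n : ℕ} {f : ℝ → ℂ} (hf : ContDiff ℝ n f)
    {D : ∀ m : ℕ, (Fin (m + 1) → ℝ) → ℂ} (hD0 : ∀ lam : Fin 1 → ℝ, D 0 lam = f (lam 0))
    (hDrec : ∀ (m : ℕ) (lam : Fin (m + 2) → ℝ), lam 0 ≠ lam (Fin.last (m + 1)) →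
      D (m + 1) lam = (D m (lam ∘ Fin.castSucc) - D m (lam ∘ Fin.succ)) /
        ((lam 0 : ℂ) - (lam (Fin.last (m + 1)) : ℂ)))
    (hDcont : ∀ m : ℕ, Continuous (D m)) {m : ℕ} (hm : m ≤ n) (lam : Fin (m + 1) → ℝ) :
    D m lam = ∫ t in simplex m, iteratedDeriv m f (baryComb lam t) := by
  induction m with
  | zero => rw [hD0, integral_simplex_zero, baryComb_zero, iteratedDeriv_zero]
  | succ m ih =>
    have hcont : Continuous (iteratedDeriv (m + 1) f) :=
      hf.continuous_iteratedDeriv _ (by exact_mod_cast hm)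
    have hderiv : ∀ x, HasDerivAt (iteratedDeriv m f) (iteratedDeriv (m + 1) f x) x := fun x => by
      rw [iteratedDeriv_succ]
      exact (hf.differentiable_iteratedDeriv m (by exact_mod_cast hm) x).hasDerivAt
    refine congrFun ((hDcont _).ext_on (dense_setOf_apply_ne (Fin.last_pos).ne)
      (continuous_integral_simplex_baryComb hcont) fun lam hlam => ?_) lam
    rw [hDrec m lam hlam, ih (by omega), ih (by omega),
      integral_simplex_deriv_baryComb hderiv hcont lam hlam]

lemma integral_integral_exp_mul_swap {Y : Type*} [MeasurableSpace Y] {ν : Measure Y}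
    [IsFiniteMeasure ν] {μ : Measure ℝ} [SFinite μ] {ρ : ℝ → ℂ} (hρ : Integrable ρ μ)
    {φ : Y → ℝ} (hφ : Measurable φ) :
    ∫ y, (∫ x, exp (I * x * φ y) * ρ x ∂μ) ∂ν = ∫ x, (∫ y, exp (I * x * φ y) ∂ν) * ρ x ∂μ := by
  have hbound : Integrable (fun z : ℝ × Y => ‖ρ z.1‖) (μ.prod ν) := by
    simpa using hρ.norm.mul_prod (integrable_const (1 : ℝ))
  have hexp : AEStronglyMeasurable (fun z : ℝ × Y => exp (I * z.1 * φ z.2)) (μ.prod ν) :=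
    (by fun_prop : Measurable fun z : ℝ × Y => exp (I * z.1 * φ z.2)).aestronglyMeasurable
  have hint : Integrable (Function.uncurry fun (x : ℝ) (y : Y) => exp (I * x * φ y) * ρ x)
      (μ.prod ν) := by
    refine hbound.mono' ?_ (Filter.Eventually.of_forall fun z => ?_)
    · exact hexp.mul hρ.aestronglyMeasurable.comp_fst
    rw [Function.uncurry_apply_pair, norm_mul,
      show I * z.1 * φ z.2 = ((z.1 * φ z.2 : ℝ) : ℂ) * I by push_cast; ring,
      norm_exp_ofReal_mul_I, one_mul]
  rw [← integral_integral_swap hint]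
  simp_rw [integral_mul_const]

lemma prod_exp_eq_exp_baryComb {m : ℕ} (lam : Fin (m + 1) → ℝ) (t : Fin m → ℝ) (x : ℝ) :
    ∏ j, exp (I * ((Fin.cons (1 - ∑ i, t i) t : Fin (m + 1) → ℝ) j : ℂ) * x * lam j) =
      exp (I * x * baryComb lam t) := by
  rw [← exp_sum, baryComb_eq_sum_cons]
  push_cast
  rw [mul_sum]
  exact congrArg _ (sum_congr rfl fun j _ => by ring)

end HermiteGenocchi

open HermiteGenocchi in
/-- Let `f ∈ Cⁿ(ℝ)` and let `D m` denote the `m`-th divided difference of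
`f`, defined recursively by `D 0 (λ) = f(λ₀)` and
`D (m+1)(λ₀,…,λ_{m+1}) = (D m(λ₀,…,λ_m) - D m(λ₁,…,λ_{m+1}))/(λ₀ - λ_{m+1})` off the
diagonal, extended continuously. Suppose `f^{(n)}(λ) = ∫ e^{ixλ} dμ(x)` for a finite complex
measure (encoded by a finite positive measure `μ` with integrable complex density `ρ`).
Then `f^{[n]}(λ₀,…,λₙ) = ∫_ℝ ∫_{Δₙ} e^{is₀xλ₀}⋯e^{isₙxλₙ} ds dμ(x)`, where the simplex
`Δₙ = {s ∈ ℝ_{≥0}^{n+1} : Σ sⱼ = 1}` is parametrized by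
`{t ∈ ℝⁿ : tᵢ ≥ 0, Σ tᵢ ≤ 1}` (Lebesgue measure, total mass `1/n!`) via
`s = (1 - Σ tᵢ, t₁, …, tₙ)`. -/
theorem divided_difference_fourier_simplex_rep
    (n : ℕ) (f : ℝ → ℂ) (hf : ContDiff ℝ (n : ℕ) f)
    (μ : Measure ℝ) [IsFiniteMeasure μ] (ρ : ℝ → ℂ) (hρ : Integrable ρ μ)
    (hFour : ∀ lam : ℝ,
      iteratedDeriv n f lam = ∫ x, Complex.exp (I * (x : ℂ) * (lam : ℂ)) * ρ x ∂μ)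
    (D : ∀ m : ℕ, (Fin (m + 1) → ℝ) → ℂ)
    (hD0 : ∀ lam : Fin 1 → ℝ, D 0 lam = f (lam 0))
    (hDrec : ∀ (m : ℕ) (lam : Fin (m + 2) → ℝ), lam 0 ≠ lam (Fin.last (m + 1)) →
      D (m + 1) lam
        = (D m (lam ∘ Fin.castSucc) - D m (lam ∘ Fin.succ)) /
            ((lam 0 : ℂ) - (lam (Fin.last (m + 1)) : ℂ)))
    (hDcont : ∀ m : ℕ, Continuous (D m)) :
    ∀ lam : Fin (n + 1) → ℝ,
      D n lam
        = ∫ x,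
            (∫ t in {t : Fin n → ℝ | (∀ i, 0 ≤ t i) ∧ ∑ i, t i ≤ 1},
              ∏ j : Fin (n + 1),
                Complex.exp
                  (I * ((Fin.cons (1 - ∑ i, t i) t : Fin (n + 1) → ℝ) j : ℂ) *
                    (x : ℂ) * (lam j : ℂ)))
              * ρ x ∂μ := by
  intro lam
  have : IsFiniteMeasure (volume.restrict (simplex n)) :=
    isFiniteMeasure_restrict.2 (isCompact_simplex n).measure_ne_top
  rw [eq_integral_simplex_iteratedDeriv hf hD0 hDrec hDcont le_rfl lam]
  simp_rw [hFour, prod_exp_eq_exp_baryComb]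
  exact integral_integral_exp_mul_swap hρ (by fun_prop : Continuous (baryComb lam)).measurable
end

section
/- Let n ∈ ℕ and f : ℝ → ℂ. Then for all λ₀, λ₁,…,λₙ ∈ ℝ with all λⱼ distinct, the divided difference identity f^{[n]}(λ₀,…,λₙ) = Σ_{p=0}^{n} (-1)^{n-p} Σ_{0<j₁<⋯<j_p≤n} (f u^p)^{[p]}(λ₀, λ_{j₁},…,λ_{j_p}) · u(λ₁)^{-1} ⋯ u(λₙ)^{-1} holds, where u(x) = x - i. -/
open Complex Finset

/-- `g^{[n]}(λ₀,…,λₙ)` for `s = {λ₀,…,λₙ}`, in Lagrange form. -/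
noncomputable def lagrangeDivDiff (g : ℝ → ℂ) (s : Finset ℝ) : ℂ :=
  ∑ x ∈ s, g x / ∏ y ∈ s.erase x, ((x : ℂ) - (y : ℂ))

/-!
Both sides are linear in the values `f λₖ`, so it suffices to compare, in Lagrange form, the
coefficients of each `f x`. On the right, that coefficient is a signed sum over the subsets `t` of
a set `M` of nodes (all nodes other than `λ₀` and `x`) of `∏_{y ∈ t} (x - i) / (x - y)`, which
the expansion of `∏_{y ∈ M} ((x - i) / (x - y) - 1) = ∏_{y ∈ M} (y - i) / (x - y)` collapses; the
factor `∏ u(λⱼ)⁻¹` then cancels the numerators `y - i`.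
-/

theorem Finset.sum_powerset_sum_mem {α β : Type*} [DecidableEq α] [AddCommMonoid β]
    (s : Finset α) (F : Finset α → α → β) :
    ∑ t ∈ s.powerset, ∑ x ∈ t, F t x = ∑ x ∈ s, ∑ t ∈ (s.erase x).powerset, F (insert x t) x := by
  rw [sum_comm' (t' := s) (s' := fun x => {t ∈ s.powerset | x ∈ t})
    (fun t x => by simp only [mem_powerset, mem_filter]; grind)]
  refine sum_congr rfl fun x hx => ?_
  conv_lhs => rw [sum_filter, ← insert_erase hx, sum_powerset_insert (notMem_erase x s)]
  rw [sum_eq_zero fun t ht => if_neg (notMem_of_mem_powerset_of_notMem ht (notMem_erase x s)),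
    zero_add]
  exact sum_congr rfl fun t _ => if_pos (mem_insert_self x t)

theorem Finset.sum_powerset_neg_one_pow_mul_prod {ι R : Type*} [DecidableEq ι] [CommRing R]
    (M : Finset ι) (g : ι → R) :
    ∑ t ∈ M.powerset, (-1 : R) ^ (#M - #t) * ∏ j ∈ t, g j = ∏ j ∈ M, (g j - 1) := by
  simp_rw [sub_eq_add_neg, prod_add, prod_const]
  refine sum_congr rfl fun t ht => ?_
  rw [card_sdiff_of_subset (mem_powerset.mp ht), mul_comm]

theorem lagrangeDivDiff_insert (g : ℝ → ℂ) {a : ℝ} {t : Finset ℝ} (ha : a ∉ t) :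
    lagrangeDivDiff g (insert a t) = g a / ∏ y ∈ t, ((a : ℂ) - y) +
      ∑ x ∈ t, g x / (((x : ℂ) - a) * ∏ y ∈ t.erase x, ((x : ℂ) - y)) := by
  rw [lagrangeDivDiff, sum_insert ha, erase_insert ha]
  congr 1
  refine sum_congr rfl fun x hx => ?_
  have hxa : x ≠ a := ne_of_mem_of_not_mem hx ha
  rw [erase_insert_of_ne hxa.symm, prod_insert fun h => ha (mem_of_mem_erase h)]

theorem sum_powerset_pow_div_prod_mul_prod_inv (x : ℝ) (c : ℂ) {M : Finset ℝ} (hx : x ∉ M)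
    (hc : ∀ y ∈ M, (y : ℂ) ≠ c) :
    (∑ t ∈ M.powerset, (-1 : ℂ) ^ (#M - #t) * (((x : ℂ) - c) ^ #t / ∏ y ∈ t, ((x : ℂ) - y))) *
        ∏ y ∈ M, ((y : ℂ) - c)⁻¹ = (∏ y ∈ M, ((x : ℂ) - y))⁻¹ := by
  simp_rw [← prod_const, ← prod_div_distrib, sum_powerset_neg_one_pow_mul_prod,
    ← prod_inv_distrib, ← prod_mul_distrib]
  refine prod_congr rfl fun y hy => ?_
  have hxy : (x : ℂ) - y ≠ 0 :=
    sub_ne_zero.mpr (by exact_mod_cast (ne_of_mem_of_not_mem hy hx).symm)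
  have hyc : (y : ℂ) - c ≠ 0 := sub_ne_zero.mpr (hc y hy)
  field_simp
  ring

theorem lagrangeDivDiff_insert_eq_sum_powerset (f : ℝ → ℂ) (c : ℂ) {a : ℝ} {s : Finset ℝ}
    (ha : a ∉ s) (hc : ∀ y ∈ s, (y : ℂ) ≠ c) :
    lagrangeDivDiff f (insert a s) =
      ∑ t ∈ s.powerset, (-1 : ℂ) ^ (#s - #t) *
        lagrangeDivDiff (fun x => f x * ((x : ℂ) - c) ^ #t) (insert a t) *
          ∏ y ∈ s, ((y : ℂ) - c)⁻¹ := by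
  set P := ∏ y ∈ s, ((y : ℂ) - c)⁻¹
  have hsplit : ∀ t ∈ s.powerset, (-1 : ℂ) ^ (#s - #t) *
      lagrangeDivDiff (fun x => f x * ((x : ℂ) - c) ^ #t) (insert a t) * P =
        (-1 : ℂ) ^ (#s - #t) * (f a * ((a : ℂ) - c) ^ #t / ∏ y ∈ t, ((a : ℂ) - y)) * P +
          ∑ x ∈ t, (-1 : ℂ) ^ (#s - #t) *
            (f x * ((x : ℂ) - c) ^ #t / (((x : ℂ) - a) * ∏ y ∈ t.erase x, ((x : ℂ) - y))) * P := by
    intro t ht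
    rw [lagrangeDivDiff_insert _ (notMem_of_mem_powerset_of_notMem ht ha), mul_add, add_mul,
      mul_sum, sum_mul]
  have hcoeff_a : ∑ t ∈ s.powerset,
      (-1 : ℂ) ^ (#s - #t) * (f a * ((a : ℂ) - c) ^ #t / ∏ y ∈ t, ((a : ℂ) - y)) * P =
        f a / ∏ y ∈ s, ((a : ℂ) - y) := by
    rw [div_eq_mul_inv, ← sum_powerset_pow_div_prod_mul_prod_inv a c ha hc, sum_mul, mul_sum]
    exact sum_congr rfl fun t _ => by ring
  have hcoeff_x : ∀ x ∈ s, ∑ t ∈ (s.erase x).powerset, (-1 : ℂ) ^ (#s - #(insert x t)) *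
      (f x * ((x : ℂ) - c) ^ #(insert x t) /
        (((x : ℂ) - a) * ∏ y ∈ (insert x t).erase x, ((x : ℂ) - y))) * P =
        f x / (((x : ℂ) - a) * ∏ y ∈ s.erase x, ((x : ℂ) - y)) := by
    intro x hx
    have hxc : (x : ℂ) - c ≠ 0 := sub_ne_zero.mpr (hc x hx)
    rw [← div_div, div_eq_mul_inv (f x / _), ← sum_powerset_pow_div_prod_mul_prod_inv x c
      (notMem_erase x s) fun y hy => hc y (mem_of_mem_erase hy),
      show P = _ from (mul_prod_erase s (fun y => ((y : ℂ) - c)⁻¹) hx).symm,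
      ← card_erase_add_one hx, sum_mul, mul_sum]
    refine sum_congr rfl fun t ht => ?_
    have hxt : x ∉ t := notMem_of_mem_powerset_of_notMem ht (notMem_erase x s)
    rw [card_insert_of_notMem hxt, erase_insert hxt, Nat.add_sub_add_right]
    field_simp
    ring
  rw [sum_congr rfl hsplit, sum_add_distrib, sum_powerset_sum_mem, lagrangeDivDiff_insert f ha,
    hcoeff_a, sum_congr rfl hcoeff_x]

/-- For `f : ℝ → ℂ`, `n ∈ ℕ`, distinct nodes `λ₀,…,λₙ ∈ ℝ` and
`u(x) = x - i`:
`f^{[n]}(λ₀,…,λₙ) = Σ_{p=0}^{n} (-1)^{n-p} Σ_{0<j₁<⋯<j_p≤n}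
  (f u^p)^{[p]}(λ₀, λ_{j₁},…,λ_{j_p}) · u(λ₁)⁻¹ ⋯ u(λₙ)⁻¹`,
where the inner sum runs over the subsets `S = {j₁ < ⋯ < j_p} ⊆ {1,…,n}` of size `p`. -/
theorem divDiff_expansion (n : ℕ) (f : ℝ → ℂ) (lam : Fin (n + 1) → ℝ)
    (hlam : Function.Injective lam) :
    lagrangeDivDiff f (Finset.image lam Finset.univ)
      = ∑ p ∈ range (n + 1), (-1 : ℂ) ^ (n - p) *
          ∑ S ∈ Finset.powersetCard p ((Finset.univ : Finset (Fin (n + 1))).erase 0),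
            lagrangeDivDiff (fun x => f x * ((x : ℂ) - I) ^ p)
                (insert (lam 0) (Finset.image lam S)) *
              ∏ j ∈ (Finset.univ : Finset (Fin (n + 1))).erase 0, (((lam j : ℂ) - I))⁻¹ := by
  set U := (univ : Finset (Fin (n + 1))).erase 0
  have hU : #U = n := by simp [U]
  have himage : image lam univ = insert (lam 0) (image lam U) := by
    rw [← image_insert, insert_erase (mem_univ 0)]
  have h0 : lam 0 ∉ image lam U := by simp [U, hlam.eq_iff]
  rw [himage, lagrangeDivDiff_insert_eq_sum_powerset f I h0 fun y _ => by simp [Complex.ext_iff],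
    powerset_image, sum_image (image_injective hlam).injOn, card_image_of_injective _ hlam,
    prod_image hlam.injOn, hU, sum_powerset, hU]
  refine sum_congr rfl fun p _ => ?_
  rw [mul_sum]
  refine sum_congr rfl fun S hS => ?_
  rw [card_image_of_injective _ hlam, (mem_powersetCard.mp hS).2, mul_assoc]
end

section
/- Let n ∈ ℕ, let H₀,…,Hₙ be self-adjoint on ℋ, and let f ∈ C^n(ℝ) with f^{(n)} the Fourier transform of a finite complex measure μ. For bounded operators V₁,…,Vₙ on ℋ, define T(V₁,…,Vₙ)ψ = ∫_ℝ ∫_{Δₙ} e^{is₀xH₀} V₁ e^{is₁xH₁} ⋯ Vₙ e^{isₙxHₙ} ψ ds dμ(x). Then T(V₁,…,Vₙ) is a bounded operator with ‖T(V₁,…,Vₙ)‖ ≤ (1/n!) ‖μ‖ ∏_{j=1}^n ‖Vⱼ‖, where ‖μ‖ is the total variation of μ. -/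
/-!
The integrand `e^{is₀xH₀} V₁ ⋯ Vₙ e^{isₙxHₙ}` is a product of isometries and the `Vⱼ`, so its
norm is at most `∏ ‖Vⱼ‖`; it is strongly (not norm) continuous, because a strongly continuous
family of contractions is jointly continuous in time and vector. An operator-valued integrand
bounded in norm by an integrable `g` integrates, vector by vector, to an operator of norm at most
`∫ g`. Applying this first over the simplex, of volume `1 / n!`, and then against `ρ dμ` gives
`‖T‖ ≤ (1 / n!) (∫ ‖ρ‖ dμ) ∏ ‖Vⱼ‖`.
-/

open Complex MeasureTheory Finset

variable {ℋ : Type*} [NormedAddCommGroup ℋ] [InnerProductSpace ℂ ℋ] [CompleteSpace ℋ]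

/-- The alternating composition `U₀ ∘ V₁ ∘ U₁ ∘ ⋯ ∘ Vₙ ∘ Uₙ` of bounded operators. -/
noncomputable def moiChain :
    (n : ℕ) → (Fin (n + 1) → (ℋ →L[ℂ] ℋ)) → (Fin n → (ℋ →L[ℂ] ℋ)) → (ℋ →L[ℂ] ℋ)
  | 0, U, _ => U 0
  | n + 1, U, V =>
      (U 0).comp ((V 0).comp (moiChain n (fun i => U i.succ) (fun i => V i.succ)))

section moiChain

variable {H : Type*} [NormedAddCommGroup H] [InnerProductSpace ℂ H]

theorem norm_moiChain_le : ∀ (n : ℕ) (U : Fin (n + 1) → (H →L[ℂ] H)) (V : Fin n → (H →L[ℂ] H)),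
    ‖moiChain n U V‖ ≤ (∏ j, ‖U j‖) * ∏ j, ‖V j‖
  | 0, U, V => by simp [moiChain]
  | n + 1, U, V => by
    have ih := norm_moiChain_le n (fun i => U i.succ) (fun i => V i.succ)
    calc ‖moiChain (n + 1) U V‖
        ≤ ‖U 0‖ * (‖V 0‖ * ‖moiChain n (fun i => U i.succ) (fun i => V i.succ)‖) :=
          (U 0).opNorm_comp_le _ |>.trans (by gcongr; exact (V 0).opNorm_comp_le _)
      _ ≤ ‖U 0‖ * (‖V 0‖ * ((∏ j : Fin (n + 1), ‖U j.succ‖) * ∏ j : Fin n, ‖V j.succ‖)) := by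
          gcongr
      _ = (∏ j, ‖U j‖) * ∏ j, ‖V j‖ := by
          rw [Fin.prod_univ_succ (fun j => ‖U j‖), Fin.prod_univ_succ (fun j => ‖V j‖)]; ring

theorem continuous_moiChain_apply {α : Type*} [TopologicalSpace α] :
    ∀ (n : ℕ) (U : Fin (n + 1) → α → (H →L[ℂ] H)),
      (∀ j, Continuous fun p : α × H => U j p.1 p.2) → ∀ (V : Fin n → (H →L[ℂ] H)) (ψ : H),
      Continuous fun a => moiChain n (fun j => U j a) V ψ
  | 0, U, hU, _, ψ => (hU 0).comp (continuous_id.prodMk continuous_const)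
  | n + 1, U, hU, V, ψ => by
    have ih := continuous_moiChain_apply n (fun j => U j.succ) (fun j => hU j.succ)
      (fun i => V i.succ) ψ
    exact (hU 0).comp (continuous_id.prodMk ((V 0).continuous.comp ih))

end moiChain

theorem ContinuousLinearMap.continuous_uncurry_of_nnnorm_le {X 𝕜 E F : Type*} [TopologicalSpace X]
    [NontriviallyNormedField 𝕜] [SeminormedAddCommGroup E] [NormedSpace 𝕜 E]
    [SeminormedAddCommGroup F] [NormedSpace 𝕜 F] {U : X → E →L[𝕜] F} {C : NNReal}
    (hC : ∀ x, ‖U x‖₊ ≤ C) (hU : ∀ ψ, Continuous fun x => U x ψ) :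
    Continuous fun p : X × E => U p.1 p.2 :=
  continuous_prod_of_continuous_lipschitzWith' _ C (fun x => (U x).lipschitz.weaken (hC x)) hU

theorem ContinuousLinearMap.exists_apply_eq_integral_of_norm_le {α 𝕜 E F : Type*}
    [MeasurableSpace α] {ν : Measure α} [NontriviallyNormedField 𝕜]
    [NormedAddCommGroup E] [NormedSpace 𝕜 E] [NormedAddCommGroup F] [NormedSpace ℝ F]
    [NormedSpace 𝕜 F] [SMulCommClass ℝ 𝕜 F] {A : α → E →L[𝕜] F}
    (hA : ∀ ψ, AEStronglyMeasurable (fun a => A a ψ) ν) {g : α → ℝ} (hg : Integrable g ν)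
    (hAg : ∀ᵐ a ∂ν, ‖A a‖ ≤ g a) :
    ∃ T : E →L[𝕜] F, (∀ ψ, T ψ = ∫ a, A a ψ ∂ν) ∧ ‖T‖ ≤ ∫ a, g a ∂ν := by
  have hbound : ∀ ψ, ∀ᵐ a ∂ν, ‖A a ψ‖ ≤ g a * ‖ψ‖ := fun ψ =>
    hAg.mono fun a h => (A a).le_of_opNorm_le h ψ
  have hint : ∀ ψ, Integrable (fun a => A a ψ) ν := fun ψ =>
    (hg.mul_const ‖ψ‖).mono' (hA ψ) (hbound ψ)
  let L : E →ₗ[𝕜] F :=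
    { toFun := fun ψ => ∫ a, A a ψ ∂ν
      map_add' := fun ψ φ => by simp only [map_add, integral_add (hint ψ) (hint φ)]
      map_smul' := fun c ψ => by simp only [map_smul, integral_smul, RingHom.id_apply] }
  have hL : ∀ ψ, ‖L ψ‖ ≤ (∫ a, g a ∂ν) * ‖ψ‖ := fun ψ => by
    rw [← integral_mul_const]
    exact norm_integral_le_of_norm_le (hg.mul_const ‖ψ‖) (hbound ψ)
  have hg0 : 0 ≤ ∫ a, g a ∂ν := integral_nonneg_of_ae (hAg.mono fun a h => (norm_nonneg _).trans h)
  exact ⟨L.mkContinuous _ hL, fun ψ => rfl, L.mkContinuous_norm_le hg0 hL⟩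

/-- `cornerSimplex (Fin n) 1` is the simplex `Δₙ` in the coordinates `(s₁, …, sₙ)`, with
`s₀ = 1 - ∑ sᵢ`; its volume `1 / n!` is the total mass of the flat measure on `Δₙ`. -/
def cornerSimplex (ι : Type*) [Fintype ι] (c : ℝ) : Set (ι → ℝ) :=
  {t | (∀ i, 0 ≤ t i) ∧ ∑ i, t i ≤ c}

section CornerSimplex

open Set

variable {ι : Type*} [Fintype ι]

theorem isClosed_cornerSimplex (c : ℝ) : IsClosed (cornerSimplex ι c) := by
  have hpos : IsClosed {t : ι → ℝ | ∀ i, 0 ≤ t i} := by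
    simp only [ofPred_forall]
    exact isClosed_iInter fun i => isClosed_le continuous_const (continuous_apply i)
  exact hpos.inter
    (isClosed_le (continuous_finsetSum _ fun i _ => continuous_apply i) continuous_const)

theorem cornerSimplex_eq_empty {c : ℝ} (hc : c < 0) : cornerSimplex ι c = ∅ :=
  eq_empty_of_forall_notMem fun _ ht => (sum_nonneg fun i _ => ht.1 i).not_gt (ht.2.trans_lt hc)

theorem cons_mem_cornerSimplex_iff {n : ℕ} {c x : ℝ} {t : Fin n → ℝ} :
    (Fin.cons x t : Fin (n + 1) → ℝ) ∈ cornerSimplex (Fin (n + 1)) c ↔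
      0 ≤ x ∧ t ∈ cornerSimplex (Fin n) (c - x) := by
  simp only [cornerSimplex, mem_ofPred_eq, Fin.forall_fin_succ, Fin.cons_zero, Fin.cons_succ,
    Fin.sum_univ_succ, le_sub_iff_add_le', and_assoc]

theorem volume_cornerSimplex_succ (n : ℕ) (c : ℝ) :
    volume (cornerSimplex (Fin (n + 1)) c) =
      ∫⁻ x in Ici 0, volume (cornerSimplex (Fin n) (c - x)) := by
  set e := MeasurableEquiv.piFinSuccAbove (fun _ : Fin (n + 1) => ℝ) 0
  have he := (volume_preserving_piFinSuccAbove (fun _ : Fin (n + 1) => ℝ) 0).symm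
  have hS := (isClosed_cornerSimplex (ι := Fin (n + 1)) c).measurableSet
  have hslice : ∀ x, Prod.mk x ⁻¹' (e.symm ⁻¹' cornerSimplex (Fin (n + 1)) c) =
      {_t | 0 ≤ x} ∩ cornerSimplex (Fin n) (c - x) := by
    intro x; ext t
    simp only [e, MeasurableEquiv.piFinSuccAbove_symm_apply, Fin.insertNthEquiv_zero]
    exact cons_mem_cornerSimplex_iff
  rw [← he.measure_preimage hS.nullMeasurableSet, Measure.volume_eq_prod,
    Measure.prod_apply (e.symm.measurable hS), ← lintegral_indicator measurableSet_Ici]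
  refine lintegral_congr fun x => ?_
  by_cases hx : 0 ≤ x <;> simp [hslice, hx]

open Nat in
theorem volume_cornerSimplex (n : ℕ) {c : ℝ} (hc : 0 ≤ c) :
    volume (cornerSimplex (Fin n) c) = ENNReal.ofReal (c ^ n / n !) := by
  induction n generalizing c with
  | zero => simp [cornerSimplex, hc, volume_pi]
  | succ n ih =>
    have hslice : ∀ x ∈ Ici (0 : ℝ), volume (cornerSimplex (Fin n) (c - x)) =
        (Iic c).indicator (fun x => ENNReal.ofReal ((c - x) ^ n / n !)) x := by
      intro x _
      by_cases hx : x ∈ Iic c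
      · rw [indicator_of_mem hx, ih (sub_nonneg.2 hx)]
      · rw [indicator_of_notMem hx, cornerSimplex_eq_empty (sub_neg.2 (not_le.1 hx)),
          measure_empty]
    have hnonneg : ∀ x ∈ Icc 0 c, 0 ≤ (c - x) ^ n / n ! := fun x hx =>
      div_nonneg (pow_nonneg (sub_nonneg.2 hx.2) n) (cast_nonneg _)
    rw [volume_cornerSimplex_succ, setLIntegral_congr_fun measurableSet_Ici hslice,
      lintegral_indicator measurableSet_Iic, Measure.restrict_restrict measurableSet_Iic,
      Iic_inter_Ici, ← ofReal_integral_eq_lintegral_ofReal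
        (Continuous.integrableOn_Icc (by fun_prop))
        ((ae_restrict_iff' measurableSet_Icc).2 (.of_forall hnonneg))]
    rw [integral_Icc_eq_integral_Ioc, ← intervalIntegral.integral_of_le hc,
      intervalIntegral.integral_div, intervalIntegral.integral_comp_sub_left (fun x => x ^ n),
      integral_pow, factorial_succ]
    push_cast
    field_simp
    simp

end CornerSimplex

theorem continuous_finCons_one_sub_sum (n : ℕ) :
    Continuous fun t : Fin n → ℝ => (Fin.cons (1 - ∑ i, t i) t : Fin (n + 1) → ℝ) := by
  fun_prop

/-- The integrand `e^{is₀xH₀} V₁ e^{is₁xH₁} ⋯ Vₙ e^{isₙxHₙ}` at `s = (1 - ∑ tᵢ, t)`. -/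
noncomputable def moiIntegrand {H : Type*} [NormedAddCommGroup H] [InnerProductSpace ℂ H] {n : ℕ}
    (U : Fin (n + 1) → ℝ → (H →L[ℂ] H)) (V : Fin n → (H →L[ℂ] H)) (x : ℝ) (t : Fin n → ℝ) :
    H →L[ℂ] H :=
  moiChain n (fun j => U j ((Fin.cons (1 - ∑ i, t i) t : Fin (n + 1) → ℝ) j * x)) V

section moiIntegrand

variable {H : Type*} [NormedAddCommGroup H] [InnerProductSpace ℂ H] {n : ℕ}
  {U : Fin (n + 1) → ℝ → (H →L[ℂ] H)} (V : Fin n → (H →L[ℂ] H))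

theorem norm_moiIntegrand_le (hU : ∀ j s, ‖U j s‖₊ ≤ 1) (x : ℝ) (t : Fin n → ℝ) :
    ‖moiIntegrand U V x t‖ ≤ ∏ j, ‖V j‖ :=
  (norm_moiChain_le n _ V).trans (mul_le_of_le_one_left (by positivity)
    (prod_le_one (fun _ _ => norm_nonneg _) fun j _ => hU j _))

theorem continuous_moiIntegrand_apply (hU : ∀ j s, ‖U j s‖₊ ≤ 1)
    (hUcont : ∀ j ψ, Continuous fun s => U j s ψ) (ψ : H) :
    Continuous fun p : ℝ × (Fin n → ℝ) => moiIntegrand U V p.1 p.2 ψ := by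
  have htime : ∀ j, Continuous fun p : ℝ × (Fin n → ℝ) =>
      (Fin.cons (1 - ∑ i, p.2 i) p.2 : Fin (n + 1) → ℝ) j * p.1 := fun j =>
    ((continuous_apply j).comp ((continuous_finCons_one_sub_sum n).comp continuous_snd)).mul
      continuous_fst
  have hU' : ∀ j, Continuous fun q : (ℝ × (Fin n → ℝ)) × H =>
      U j ((Fin.cons (1 - ∑ i, q.1.2 i) q.1.2 : Fin (n + 1) → ℝ) j * q.1.1) q.2 := fun j =>
    (ContinuousLinearMap.continuous_uncurry_of_nnnorm_le (hU j) (hUcont j)).comp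
      (((htime j).comp continuous_fst).prodMk continuous_snd)
  exact continuous_moiChain_apply n _ hU' V ψ

theorem exists_apply_eq_setIntegral_moiIntegrand (hU : ∀ j s, ‖U j s‖₊ ≤ 1)
    (hUcont : ∀ j ψ, Continuous fun s => U j s ψ) (x : ℝ) :
    ∃ T : H →L[ℂ] H, (∀ ψ, T ψ = ∫ t in cornerSimplex (Fin n) 1, moiIntegrand U V x t ψ) ∧
      ‖T‖ ≤ 1 / n.factorial * ∏ j, ‖V j‖ := by
  have hS : volume (cornerSimplex (Fin n) 1) = ENNReal.ofReal (1 / n.factorial) := by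
    simpa using volume_cornerSimplex n zero_le_one
  have : IsFiniteMeasure (volume.restrict (cornerSimplex (Fin n) 1)) :=
    isFiniteMeasure_restrict.2 (hS ▸ ENNReal.ofReal_ne_top)
  obtain ⟨T, hT, hnorm⟩ := ContinuousLinearMap.exists_apply_eq_integral_of_norm_le
    (ν := volume.restrict (cornerSimplex (Fin n) 1))
    (fun ψ => ((continuous_moiIntegrand_apply V hU hUcont ψ).comp
      (Continuous.prodMk_right x)).aestronglyMeasurable)
    (integrable_const (∏ j, ‖V j‖)) (.of_forall (norm_moiIntegrand_le V hU x))
  refine ⟨T, hT, hnorm.trans_eq ?_⟩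
  rw [integral_const, measureReal_restrict_apply_univ, measureReal_def, hS,
    ENNReal.toReal_ofReal (by positivity), smul_eq_mul]

end moiIntegrand

theorem moi_norm_bound_general
    (n : ℕ)
    (U : Fin (n + 1) → ℝ → (ℋ →L[ℂ] ℋ))
    (hUiso : ∀ j (s : ℝ) (ψ : ℋ), ‖U j s ψ‖ = ‖ψ‖)
    (hUcont : ∀ j (ψ : ℋ), Continuous fun s => U j s ψ)
    (μ : Measure ℝ) (ρ : ℝ → ℂ) (hρ : Integrable ρ μ)
    (V : Fin n → (ℋ →L[ℂ] ℋ)) :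
    ∃ T : ℋ →L[ℂ] ℋ,
      (∀ ψ : ℋ,
        T ψ = ∫ x,
            ρ x •
              (∫ t in {t : Fin n → ℝ | (∀ i, 0 ≤ t i) ∧ ∑ i, t i ≤ 1},
                (moiChain n
                    (fun j =>
                      U j (((Fin.cons (1 - ∑ i, t i) t : Fin (n + 1) → ℝ) j) * x))
                    V) ψ) ∂μ) ∧
      ‖T‖ ≤ (1 / n.factorial : ℝ) * (∫ x, ‖ρ x‖ ∂μ) * ∏ j, ‖V j‖ := by
  have hU : ∀ j s, ‖U j s‖₊ ≤ 1 := fun j s =>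
    (U j s).opNNNorm_le_bound 1 fun ψ => by simp [← NNReal.coe_le_coe, hUiso]
  choose T hT hTnorm using exists_apply_eq_setIntegral_moiIntegrand V hU hUcont
  have hmeas : ∀ ψ, AEStronglyMeasurable (fun x => (ρ x • T x) ψ) μ := fun ψ => by
    simp only [smul_apply, hT]
    exact hρ.1.smul ((continuous_moiIntegrand_apply V hU hUcont ψ).stronglyMeasurable
      |>.integral_prod_right').aestronglyMeasurable
  obtain ⟨T', hT', hnorm⟩ := ContinuousLinearMap.exists_apply_eq_integral_of_norm_le hmeas
    (hρ.norm.mul_const _)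
    (.of_forall fun x => (norm_smul_le _ _).trans (by gcongr; exact hTnorm x))
  refine ⟨T', fun ψ => by simp [hT', hT, moiIntegrand, cornerSimplex], hnorm.trans_eq ?_⟩
  rw [integral_mul_const]
  ring

/-- Let `H₀,…,Hₙ` be self-adjoint with unitary groups `e^{isxHⱼ}`
(encoded by isometric operator families `U j`), let `f^{(n)}` be the Fourier transform of a
finite complex measure (finite measure `μ` with integrable density `ρ`), and let
`V₁,…,Vₙ` be bounded operators. Then the multiple operator integral
`T(V₁,…,Vₙ)ψ = ∫_ℝ ∫_{Δₙ} e^{is₀xH₀}V₁e^{is₁xH₁}⋯Vₙe^{isₙxHₙ}ψ ds dμ(x)` defines a bounded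
operator with `‖T‖ ≤ (1/n!) ‖μ‖ ∏ⱼ ‖Vⱼ‖`, where `‖μ‖ = ∫ ‖ρ‖ dμ` is the total variation and
the simplex `Δₙ` is parametrized by `{t ∈ ℝⁿ : tᵢ ≥ 0, Σtᵢ ≤ 1}` via
`s = (1 - Σtᵢ, t₁,…,tₙ)`. -/
theorem moi_norm_bound
    (n : ℕ)
    (U : Fin (n + 1) → ℝ → (ℋ →L[ℂ] ℋ))
    (hU0 : ∀ j, U j 0 = 1)
    (hUgrp : ∀ j (s t : ℝ), U j (s + t) = (U j s).comp (U j t))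
    (hUiso : ∀ j (s : ℝ) (ψ : ℋ), ‖U j s ψ‖ = ‖ψ‖)
    (hUcont : ∀ j (ψ : ℋ), Continuous fun s => U j s ψ)
    (μ : Measure ℝ) [IsFiniteMeasure μ] (ρ : ℝ → ℂ) (hρ : Integrable ρ μ)
    (V : Fin n → (ℋ →L[ℂ] ℋ)) :
    ∃ T : ℋ →L[ℂ] ℋ,
      (∀ ψ : ℋ,
        T ψ = ∫ x,
            ρ x •
              (∫ t in {t : Fin n → ℝ | (∀ i, 0 ≤ t i) ∧ ∑ i, t i ≤ 1},
                (moiChain n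
                    (fun j =>
                      U j (((Fin.cons (1 - ∑ i, t i) t : Fin (n + 1) → ℝ) j) * x))
                    V) ψ) ∂μ) ∧
      ‖T‖ ≤ (1 / n.factorial : ℝ) * (∫ x, ‖ρ x‖ ∂μ) * ∏ j, ‖V j‖ :=
  moi_norm_bound_general n U hUiso hUcont μ ρ hρ V
end

section
/- Let H be self-adjoint on ℋ and let V be a symmetric operator with dom H ⊆ dom V such that V(H-i)^{-n} is trace class for some n ∈ ℕ. Let E_H be the spectral measure of H and P_k = E_H((-k,k)). Then P_k V P_k is trace class for every k ∈ ℕ. -/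
/-! On `ran P_k` the operator `H` is bounded, so `Φ(𝟙_{(-k,k)} (x - i)ⁿ)` is a bounded operator and
`P_k = (H - i)⁻ⁿ Φ(𝟙_{(-k,k)} (x - i)ⁿ)`. Hence `P_k V P_k = P_k · V(H - i)⁻ⁿ · Φ(𝟙_{(-k,k)} (x - i)ⁿ)`
is a trace-class operator multiplied by bounded ones on both sides. Trace-class operators form a
two-sided ideal: the defining bound is invariant under adjoints and under composition with
unitaries, and every bounded operator is a linear combination of four unitaries. -/

open Complex MeasureTheory Finset

variable {ℋ : Type*} [NormedAddCommGroup ℋ] [InnerProductSpace ℂ ℋ] [CompleteSpace ℋ]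

/-- A bounded operator `T` is trace class iff the sums `Σᵢ |⟨fᵢ, T eᵢ⟩|` over all finite
orthonormal systems `(eᵢ)`, `(fᵢ)` are uniformly bounded. -/
def IsTraceClass (T : ℋ →L[ℂ] ℋ) : Prop :=
  ∃ C : ℝ, ∀ (m : ℕ) (e g : Fin m → ℋ), Orthonormal ℂ e → Orthonormal ℂ g →
    ∑ i, ‖(inner ℂ (g i) (T (e i)) : ℂ)‖ ≤ C

namespace IsTraceClass

variable {E : Type*} [NormedAddCommGroup E] [InnerProductSpace ℂ E]

lemma zero : IsTraceClass (0 : E →L[ℂ] E) :=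
  ⟨0, fun m e g _ _ => by simp⟩

lemma add {S T : E →L[ℂ] E} (hS : IsTraceClass S) (hT : IsTraceClass T) :
    IsTraceClass (S + T) := by
  obtain ⟨C, hC⟩ := hS
  obtain ⟨D, hD⟩ := hT
  refine ⟨C + D, fun m e g he hg => ?_⟩
  calc ∑ i, ‖(inner ℂ (g i) ((S + T) (e i)) : ℂ)‖
      ≤ ∑ i, (‖(inner ℂ (g i) (S (e i)) : ℂ)‖ + ‖(inner ℂ (g i) (T (e i)) : ℂ)‖) :=
        sum_le_sum fun i _ => by
          simpa only [add_apply, inner_add_right] using norm_add_le _ _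
    _ ≤ C + D := by rw [sum_add_distrib]; exact add_le_add (hC m e g he hg) (hD m e g he hg)

lemma smul {T : E →L[ℂ] E} (hT : IsTraceClass T) (c : ℂ) : IsTraceClass (c • T) := by
  obtain ⟨C, hC⟩ := hT
  refine ⟨‖c‖ * C, fun m e g he hg => ?_⟩
  simp only [smul_apply, inner_smul_right, norm_mul, ← mul_sum]
  exact mul_le_mul_of_nonneg_left (hC m e g he hg) (norm_nonneg c)

lemma adjoint [CompleteSpace E] {T : E →L[ℂ] E} (hT : IsTraceClass T) :
    IsTraceClass (ContinuousLinearMap.adjoint T) := by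
  obtain ⟨C, hC⟩ := hT
  refine ⟨C, fun m e g he hg => ?_⟩
  simpa only [ContinuousLinearMap.adjoint_inner_right, ← inner_conj_symm (T _), RCLike.norm_conj]
    using hC m g e hg he

lemma comp_unitary [CompleteSpace E] {T : E →L[ℂ] E} (hT : IsTraceClass T)
    (U : unitary (E →L[ℂ] E)) : IsTraceClass (T ∘L (U : E →L[ℂ] E)) := by
  obtain ⟨C, hC⟩ := hT
  exact ⟨C, fun m e g he hg =>
    hC m _ g (he.comp_linearIsometryEquiv (Unitary.linearIsometryEquiv U)) hg⟩

lemma comp_clm [CompleteSpace E] {T : E →L[ℂ] E} (hT : IsTraceClass T) (B : E →L[ℂ] E) :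
    IsTraceClass (T ∘L B) := by
  have hB : B ∈ Submodule.span ℂ (unitary (E →L[ℂ] E) : Set (E →L[ℂ] E)) := by
    rw [CStarAlgebra.span_unitary]; trivial
  induction hB using Submodule.span_induction with
  | mem U hU => exact hT.comp_unitary ⟨U, hU⟩
  | zero => simpa using zero
  | add S S' _ _ hS hS' => simpa only [ContinuousLinearMap.comp_add] using hS.add hS'
  | smul c S _ hS => simpa only [ContinuousLinearMap.comp_smul] using hS.smul c

lemma clm_comp [CompleteSpace E] {T : E →L[ℂ] E} (hT : IsTraceClass T) (A : E →L[ℂ] E) :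
    IsTraceClass (A ∘L T) := by
  simpa only [ContinuousLinearMap.adjoint_comp, ContinuousLinearMap.adjoint_adjoint]
    using (hT.adjoint.comp_clm (ContinuousLinearMap.adjoint A)).adjoint

end IsTraceClass

lemma Bornology.IsBounded.exists_norm_indicator_le {α F : Type*} [PseudoMetricSpace α]
    [ProperSpace α] [SeminormedAddCommGroup F] {s : Set α} (hs : Bornology.IsBounded s)
    {f : α → F} (hf : Continuous f) : ∃ C, ∀ x, ‖s.indicator f x‖ ≤ C := by
  obtain ⟨C, hC⟩ := hs.isCompact_closure.exists_bound_of_continuousOn hf.continuousOn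
  refine ⟨max C 0, fun x => ?_⟩
  by_cases hx : x ∈ s
  · rw [Set.indicator_of_mem hx]
    exact (hC x (subset_closure hx)).trans (le_max_left _ _)
  · rw [Set.indicator_of_notMem hx, norm_zero]
    exact le_max_right _ _

lemma ofReal_sub_I_ne_zero (x : ℝ) : (x : ℂ) - I ≠ 0 := fun h => by
  simpa using congrArg im h

lemma norm_inv_ofReal_sub_I_le_one (x : ℝ) : ‖((x : ℂ) - I)⁻¹‖ ≤ 1 := by
  rw [norm_inv]
  apply inv_le_one_of_one_le₀
  simpa using abs_im_le_norm ((x : ℂ) - I)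

lemma exists_norm_pow_mul_le {α : Type*} {f h : α → ℂ} (hf : ∃ C, ∀ x, ‖f x‖ ≤ C)
    (hh : ∃ C, ∀ x, ‖h x‖ ≤ C) (m : ℕ) : ∃ C, ∀ x, ‖(f ^ m * h) x‖ ≤ C := by
  obtain ⟨C, hC⟩ := hf
  obtain ⟨D, hD⟩ := hh
  refine ⟨|C| ^ m * D, fun x => ?_⟩
  rw [Pi.mul_apply, Pi.pow_apply, norm_mul, norm_pow]
  exact mul_le_mul (pow_le_pow_left₀ (norm_nonneg _) ((hC x).trans (le_abs_self C)) m) (hD x)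
    (norm_nonneg _) (pow_nonneg (abs_nonneg C) m)

lemma map_pow_mul_of_map_mul {E : Type*} [NormedAddCommGroup E] [NormedSpace ℂ E]
    (Φ : (ℝ → ℂ) → (E →L[ℂ] E))
    (hΦmul : ∀ g₁ g₂ : ℝ → ℂ, Measurable g₁ → Measurable g₂ →
      (∃ C, ∀ x, ‖g₁ x‖ ≤ C) → (∃ C, ∀ x, ‖g₂ x‖ ≤ C) →
      Φ (g₁ * g₂) = (Φ g₁).comp (Φ g₂))
    {f h : ℝ → ℂ} (hf : Measurable f) (hfb : ∃ C, ∀ x, ‖f x‖ ≤ C) (hh : Measurable h)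
    (hhb : ∃ C, ∀ x, ‖h x‖ ≤ C) (m : ℕ) : Φ (f ^ m * h) = Φ f ^ m * Φ h := by
  induction m with
  | zero => simp
  | succ m ih =>
    rw [pow_succ', mul_assoc, hΦmul f (f ^ m * h) hf ((hf.pow_const m).mul hh) hfb
      (exists_norm_pow_mul_le hfb hhb m), ih, pow_succ', mul_assoc]
    rfl

theorem PkVPk_traceClass_general
    (V : ℋ →ₗ.[ℂ] ℋ)
    (R : ℋ →L[ℂ] ℋ)
    -- the bounded Borel functional calculus of `H`
    (Φ : (ℝ → ℂ) → (ℋ →L[ℂ] ℋ))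
    (hΦmul : ∀ g₁ g₂ : ℝ → ℂ, Measurable g₁ → Measurable g₂ →
      (∃ C, ∀ x, ‖g₁ x‖ ≤ C) → (∃ C, ∀ x, ‖g₂ x‖ ≤ C) →
      Φ (g₁ * g₂) = (Φ g₁).comp (Φ g₂))
    (hΦres : Φ (fun x : ℝ => (((x : ℂ)) - I)⁻¹) = R)
    -- `V(H-i)⁻ⁿ` is trace class
    (n : ℕ)
    (hRVdom : ∀ ψ : ℋ, (⇑R)^[n] ψ ∈ V.domain)
    (VRn : ℋ →L[ℂ] ℋ)
    (hVRn : ∀ ψ : ℋ, VRn ψ = V ⟨(⇑R)^[n] ψ, hRVdom ψ⟩)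
    (hVRn_tc : IsTraceClass VRn)
    -- the spectral projections `P k = E_H((-k,k))`
    (P : ℕ → (ℋ →L[ℂ] ℋ))
    (hP : ∀ k : ℕ, P k = Φ (Set.indicator (Set.Ioo (-(k : ℝ)) (k : ℝ)) fun _ => 1)) :
    ∀ k : ℕ,
      ∃ hmem : ∀ ψ : ℋ, P k ψ ∈ V.domain,
        ∃ T : ℋ →L[ℂ] ℋ,
          (∀ ψ : ℋ, T ψ = P k (V ⟨P k ψ, hmem ψ⟩)) ∧ IsTraceClass T := by
  intro k
  set g : ℝ → ℂ := (Set.Ioo (-(k : ℝ)) k).indicator fun x => ((x : ℂ) - I) ^ n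
  have hg : Measurable g := (by fun_prop : Measurable _).indicator measurableSet_Ioo
  have hPk : P k = R ^ n * Φ g := by
    have hfactor : (Set.Ioo (-(k : ℝ)) k).indicator (fun _ => (1 : ℂ))
        = (fun x : ℝ => ((x : ℂ) - I)⁻¹) ^ n * g := by
      ext x
      by_cases hx : x ∈ Set.Ioo (-(k : ℝ)) k
      · simp [g, hx, inv_mul_cancel₀ (pow_ne_zero n (ofReal_sub_I_ne_zero x))]
      · simp [g, hx]
    rw [hP, hfactor, map_pow_mul_of_map_mul Φ hΦmul (by fun_prop)
      ⟨1, norm_inv_ofReal_sub_I_le_one⟩ hg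
      (Metric.isBounded_Ioo _ _ |>.exists_norm_indicator_le (by fun_prop)), hΦres]
  have hPk_apply (ψ : ℋ) : P k ψ = (⇑R)^[n] (Φ g ψ) := by
    rw [hPk, mul_apply_eq_comp, FunLike.coe_pow_eq_iterate]
  refine ⟨fun ψ => hPk_apply ψ ▸ hRVdom _, P k ∘L VRn ∘L Φ g, fun ψ => ?_,
    (hVRn_tc.comp_clm _).clm_comp _⟩
  simp only [ContinuousLinearMap.comp_apply, hVRn, hPk_apply]

/-- Let `H` be self-adjoint on `ℋ` with Borel functional calculus `Φ`
(so that `Φ((·-i)⁻¹) = (H-i)⁻¹ = R`), and let `V` be symmetric with `dom H ⊆ dom V` such that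
`V(H-i)⁻ⁿ` is trace class for some `n ∈ ℕ`. With `P k = E_H((-k,k)) = Φ(𝟙_{(-k,k)})`,
the operator `P k V P k` is (everywhere defined, bounded and) trace class for every `k`. -/
theorem PkVPk_traceClass
    (H V : ℋ →ₗ.[ℂ] ℋ) (hH : IsSelfAdjoint H)
    (hdom : H.domain ≤ V.domain)
    (hsymm : ∀ x y : V.domain, (inner ℂ (V x) (y : ℋ) : ℂ) = inner ℂ (x : ℋ) (V y))
    (R : ℋ →L[ℂ] ℋ) (hR1 : ∀ ψ : ℋ, R ψ ∈ H.domain)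
    (hR2 : ∀ ψ : ℋ, H ⟨R ψ, hR1 ψ⟩ - I • R ψ = ψ)
    (hR3 : ∀ φ : H.domain, R (H φ - I • (φ : ℋ)) = (φ : ℋ))
    -- the bounded Borel functional calculus of `H`
    (Φ : (ℝ → ℂ) → (ℋ →L[ℂ] ℋ))
    (hΦ1 : Φ (fun _ => 1) = 1)
    (hΦadd : ∀ g₁ g₂ : ℝ → ℂ, Measurable g₁ → Measurable g₂ →
      (∃ C, ∀ x, ‖g₁ x‖ ≤ C) → (∃ C, ∀ x, ‖g₂ x‖ ≤ C) → Φ (g₁ + g₂) = Φ g₁ + Φ g₂)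
    (hΦmul : ∀ g₁ g₂ : ℝ → ℂ, Measurable g₁ → Measurable g₂ →
      (∃ C, ∀ x, ‖g₁ x‖ ≤ C) → (∃ C, ∀ x, ‖g₂ x‖ ≤ C) →
      Φ (g₁ * g₂) = (Φ g₁).comp (Φ g₂))
    (hΦnorm : ∀ (g : ℝ → ℂ) (C : ℝ), (∀ x, ‖g x‖ ≤ C) → ∀ ψ : ℋ, ‖Φ g ψ‖ ≤ C * ‖ψ‖)
    (hΦstar : ∀ g : ℝ → ℂ, ∀ ψ χ : ℋ,
      (inner ℂ (Φ g ψ) χ : ℂ) = inner ℂ ψ (Φ (fun x => starRingEnd ℂ (g x)) χ))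
    (hΦres : Φ (fun x : ℝ => (((x : ℂ)) - I)⁻¹) = R)
    -- `V(H-i)⁻ⁿ` is trace class
    (n : ℕ) (hn : 1 ≤ n)
    (hRVdom : ∀ ψ : ℋ, (⇑R)^[n] ψ ∈ V.domain)
    (VRn : ℋ →L[ℂ] ℋ)
    (hVRn : ∀ ψ : ℋ, VRn ψ = V ⟨(⇑R)^[n] ψ, hRVdom ψ⟩)
    (hVRn_tc : IsTraceClass VRn)
    -- the spectral projections `P k = E_H((-k,k))`
    (P : ℕ → (ℋ →L[ℂ] ℋ))
    (hP : ∀ k : ℕ, P k = Φ (Set.indicator (Set.Ioo (-(k : ℝ)) (k : ℝ)) fun _ => 1)) :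
    ∀ k : ℕ,
      ∃ hmem : ∀ ψ : ℋ, P k ψ ∈ V.domain,
        ∃ T : ℋ →L[ℂ] ℋ,
          (∀ ψ : ℋ, T ψ = P k (V ⟨P k ψ, hmem ψ⟩)) ∧ IsTraceClass T :=
  PkVPk_traceClass_general V R Φ hΦmul hΦres n hRVdom VRn hVRn hVRn_tc P hP
end

section
/- Let H be self-adjoint on ℋ, V symmetric with ‖Vψ‖ ≤ a‖Hψ‖ + b‖ψ‖ on dom H for a < 1, and suppose V(H-i)^{-p} ∈ 𝒮^{n/p} for p = 1,…,n. Set H_t = H + tV for t ∈ [0,1]. Then W(H_t - i)^{-1} ∈ 𝒮^n with ‖V(H_t-i)^{-1}‖_n ≤ ((1+b)/(1-a)) ‖V(H-i)^{-1}‖_n. -/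
/-! The second resolvent identity gives `V(H_t - i)⁻¹ = V(H - i)⁻¹ (1 - tV(H_t - i)⁻¹)`. Since
`H_t` is symmetric, `‖(H_t - i)φ‖² = ‖H_t φ‖² + ‖φ‖²`, so `‖H_t (H_t - i)⁻¹‖, ‖(H_t - i)⁻¹‖ ≤ 1`;
with the relative bound this gives `‖tV(H_t - i)⁻¹‖ ≤ (a + b)/(1 - a)`, hence
`‖1 - tV(H_t - i)⁻¹‖ ≤ (1 + b)/(1 - a)`.

It remains to show `‖TA‖_p ≤ ‖A‖ ‖T‖_p` for the norm defined as a supremum over finite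
orthonormal systems `(eᵢ)`, `(gᵢ)`. Compress `A` to a finite-dimensional subspace containing the
`eᵢ` and `Aeᵢ`. After scaling it is a contraction there, hence the average of two isometries:
writing `L βᵢ = sᵢ ζᵢ` with orthonormal bases `β`, `ζ` and `0 ≤ sᵢ ≤ 1`, take the unimodular
coefficients `sᵢ ± i√(1 - sᵢ²)`. Each isometry maps `(eᵢ)` to an orthonormal system, and
Minkowski's inequality concludes. -/

open Complex MeasureTheory Finset

variable {ℋ : Type*} [NormedAddCommGroup ℋ] [InnerProductSpace ℂ ℋ] [CompleteSpace ℋ]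

/-- The defining set for the Schatten `p`-norm of `T`: the values
`(Σᵢ |⟨gᵢ, T eᵢ⟩|^p)^{1/p}` over all finite orthonormal systems `(eᵢ)`, `(gᵢ)`. -/
def schattenSet (p : ℝ) (T : ℋ →L[ℂ] ℋ) : Set ℝ :=
  { r | ∃ (m : ℕ) (e g : Fin m → ℋ), Orthonormal ℂ e ∧ Orthonormal ℂ g ∧
      r = (∑ i, ‖(inner ℂ (g i) (T (e i)) : ℂ)‖ ^ p) ^ (1 / p) }

/-- `T` belongs to the Schatten `p`-class `𝒮^p` (for `p ≥ 1`). -/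
def MemSchatten (p : ℝ) (T : ℋ →L[ℂ] ℋ) : Prop :=
  BddAbove (schattenSet p T)

/-- The Schatten `p`-norm `‖T‖_p` (for `p ≥ 1`). -/
noncomputable def schattenNorm (p : ℝ) (T : ℋ →L[ℂ] ℋ) : ℝ :=
  sSup (schattenSet p T)

lemma rpow_sum_norm_mul_add_le {𝕜 ι : Type*} [NormedField 𝕜] (s : Finset ι) {p : ℝ} (hp : 1 ≤ p)
    (k : 𝕜) (f g : ι → 𝕜) :
    (∑ i ∈ s, ‖k * (f i + g i)‖ ^ p) ^ (1 / p) ≤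
      ‖k‖ * ((∑ i ∈ s, ‖f i‖ ^ p) ^ (1 / p) + (∑ i ∈ s, ‖g i‖ ^ p) ^ (1 / p)) := by
  have hp0 : 0 < p := by linarith
  calc (∑ i ∈ s, ‖k * (f i + g i)‖ ^ p) ^ (1 / p)
      = ‖k‖ * (∑ i ∈ s, ‖f i + g i‖ ^ p) ^ (1 / p) := by
        simp_rw [norm_mul, Real.mul_rpow (norm_nonneg _) (norm_nonneg _), ← Finset.mul_sum]
        rw [Real.mul_rpow (by positivity) (by positivity), one_div,
          Real.rpow_rpow_inv (norm_nonneg _) hp0.ne']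
    _ ≤ ‖k‖ * (∑ i ∈ s, |‖f i‖ + ‖g i‖| ^ p) ^ (1 / p) := by
        gcongr with i
        exact (norm_add_le _ _).trans (le_abs_self _)
    _ ≤ _ := by
        gcongr
        simpa only [abs_norm] using Real.Lp_add_le s (fun i => ‖f i‖) (fun i => ‖g i‖) hp

section Contractions

variable {𝕜 E : Type*} [RCLike 𝕜] [NormedAddCommGroup E] [InnerProductSpace 𝕜 E]

lemma OrthonormalBasis.exists_linearIsometry_apply_eq_sum {ι : Type*} [Fintype ι]
    (β ζ : OrthonormalBasis ι 𝕜 E) {z : ι → 𝕜} (hz : ∀ i, ‖z i‖ = 1) :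
    ∃ U : E →ₗᵢ[𝕜] E, ∀ v, U v = ∑ i, (z i * inner 𝕜 (β i) v) • ζ i := by
  let U : E →ₗ[𝕜] E := ∑ i, (z i • innerₛₗ 𝕜 (β i)).smulRight (ζ i)
  have hU : ∀ v, U v = ∑ i, (z i * inner 𝕜 (β i) v) • ζ i := fun v => by simp [U]
  refine ⟨U.isometryOfInner fun v w => ?_, hU⟩
  rw [hU, hU, ζ.orthonormal.inner_sum, ← β.sum_inner_mul_inner]
  refine Finset.sum_congr rfl fun i _ => ?_
  rw [map_mul, inner_conj_symm, mul_mul_mul_comm, RCLike.conj_mul, hz i]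
  simp

theorem LinearMap.exists_orthonormalBasis_apply_eq_norm_smul [FiniteDimensional 𝕜 E]
    (L : E →ₗ[𝕜] E) :
    ∃ β ζ : OrthonormalBasis (Fin (Module.finrank 𝕜 E)) 𝕜 E,
      ∀ i, L (β i) = (‖L (β i)‖ : 𝕜) • ζ i := by
  have hS := L.isSymmetric_adjoint_comp_self
  let β := hS.eigenvectorBasis rfl
  have horth : Pairwise fun i j => inner 𝕜 (L (β i)) (L (β j)) = 0 := by
    intro i j hij
    rw [← adjoint_inner_right, ← comp_apply, hS.apply_eigenvectorBasis, inner_smul_right,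
      β.orthonormal.2 hij, mul_zero]
  let s : Set (Fin (Module.finrank 𝕜 E)) := {i | L (β i) ≠ 0}
  have hz : Orthonormal 𝕜 (s.domRestrict fun i => (‖L (β i)‖⁻¹ : 𝕜) • L (β i)) :=
    ⟨fun i => norm_smul_inv_norm i.2, fun i j hij => by
      simp [Set.domRestrict, inner_smul_left, inner_smul_right,
        horth (Subtype.coe_ne_coe.2 hij)]⟩
  obtain ⟨ζ, hζ⟩ := hz.exists_orthonormalBasis_extension_of_card_eq (by simp)
  refine ⟨β, ζ, fun i => ?_⟩
  by_cases hi : L (β i) = 0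
  · simp [hi]
  · rw [hζ i hi, smul_smul, mul_inv_cancel₀ (by simpa using hi), one_smul]

end Contractions

section ComplexInnerProductSpace

variable {E : Type*} [NormedAddCommGroup E] [InnerProductSpace ℂ E]

lemma LinearMap.exists_linearIsometry_average_eq [FiniteDimensional ℂ E] (L : E →ₗ[ℂ] E)
    (hL : ∀ v, ‖L v‖ ≤ ‖v‖) :
    ∃ U W : E →ₗᵢ[ℂ] E, ∀ v, L v = (2⁻¹ : ℂ) • (U v + W v) := by
  obtain ⟨β, ζ, hβζ⟩ := L.exists_orthonormalBasis_apply_eq_norm_smul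
  let s i := ‖L (β i)‖
  let z (σ : ℝ) i : ℂ := (s i : ℂ) + ((σ * √(1 - s i ^ 2) : ℝ) : ℂ) * Complex.I
  have hz : ∀ σ : ℝ, σ ^ 2 = 1 → ∀ i, ‖z σ i‖ = 1 := by
    intro σ hσ i
    have hs : s i ^ 2 ≤ 1 := by
      have := hL (β i)
      rw [β.orthonormal.1 i] at this
      nlinarith [norm_nonneg (L (β i))]
    rw [Complex.norm_add_mul_I, mul_pow, hσ, one_mul, Real.sq_sqrt (by linarith),
      add_sub_cancel, Real.sqrt_one]
  obtain ⟨U, hU⟩ := β.exists_linearIsometry_apply_eq_sum ζ (hz 1 (by norm_num))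
  obtain ⟨W, hW⟩ := β.exists_linearIsometry_apply_eq_sum ζ (hz (-1) (by norm_num))
  refine ⟨U, W, fun v => ?_⟩
  conv_lhs => rw [← β.sum_repr' v]
  rw [hU, hW, map_sum, ← Finset.sum_add_distrib, Finset.smul_sum]
  refine Finset.sum_congr rfl fun i _ => ?_
  rw [map_smul, hβζ, smul_smul, ← add_smul, smul_smul]
  congr 1
  simp only [z, s, RCLike.ofReal_eq_complex_ofReal]
  push_cast
  ring

lemma zero_mem_schattenSet {p : ℝ} (hp : p ≠ 0) (T : E →L[ℂ] E) : 0 ∈ schattenSet p T :=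
  ⟨0, Fin.elim0, Fin.elim0, ⟨fun i => i.elim0, fun i => i.elim0⟩,
    ⟨fun i => i.elim0, fun i => i.elim0⟩, by simp [hp]⟩

section SchattenIdeal

variable {p c : ℝ} {T A : E →L[ℂ] E}

lemma le_mul_schattenNorm_of_mem_schattenSet_comp (hp : 1 ≤ p)
    (hT : MemSchatten p T) (hc : 0 < c) (hA : ‖A‖ ≤ c) {r : ℝ}
    (hr : r ∈ schattenSet p (T ∘L A)) : r ≤ c * schattenNorm p T := by
  obtain ⟨m, e, g, he, hg, rfl⟩ := hr
  let F := Submodule.span ℂ (Set.range e ∪ Set.range (A ∘ e))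
  have : FiniteDimensional ℂ F :=
    FiniteDimensional.span_of_finite ℂ ((Set.finite_range e).union (Set.finite_range _))
  let e' : Fin m → F := fun i => ⟨e i, Submodule.subset_span (Or.inl ⟨i, rfl⟩)⟩
  have he' : Orthonormal ℂ e' := F.subtypeₗᵢ.orthonormal_comp_iff.mp he
  let L : F →ₗ[ℂ] F := ((c⁻¹ : ℂ) • (F.orthogonalProjectionOnto ∘L A ∘L F.subtypeL)).toLinearMap
  have hL : ∀ v, ‖L v‖ ≤ ‖v‖ := fun v => by
    calc ‖L v‖ = c⁻¹ * ‖F.orthogonalProjectionOnto (A v)‖ := by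
          simp [L, norm_smul, hc.le]
      _ ≤ c⁻¹ * (c * ‖v‖) := by
          gcongr
          exact (F.norm_orthogonalProjectionOnto_apply_le _).trans (A.le_of_opNorm_le hA v)
      _ = ‖v‖ := by field_simp
  obtain ⟨U, W, hLUW⟩ := L.exists_linearIsometry_average_eq hL
  have hAe : ∀ i, A (e i) = ((c / 2 : ℝ) : ℂ) • ((U (e' i) : E) + W (e' i)) := fun i => by
    have hP : (F.orthogonalProjectionOnto (A (e i)) : E) = A (e i) := congrArg Subtype.val
      (F.orthogonalProjectionOnto_mem_subspace_eq_self
        ⟨A (e i), Submodule.subset_span (Or.inr ⟨i, rfl⟩)⟩)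
    calc A (e i) = (c : ℂ) • (L (e' i) : E) := by
          rw [show L (e' i) = (c⁻¹ : ℂ) • F.orthogonalProjectionOnto (A (e i)) from rfl,
            Submodule.coe_smul, hP, smul_smul, mul_inv_cancel₀ (by exact_mod_cast hc.ne'),
            one_smul]
      _ = ((c / 2 : ℝ) : ℂ) • ((U (e' i) : E) + W (e' i)) := by
          rw [hLUW, Submodule.coe_smul, Submodule.coe_add, smul_smul]
          congr 1
          push_cast
          ring
  have hUS := le_csSup hT
    ⟨m, _, g, (he'.comp_linearIsometry U).comp_linearIsometry F.subtypeₗᵢ, hg, rfl⟩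
  have hWS := le_csSup hT
    ⟨m, _, g, (he'.comp_linearIsometry W).comp_linearIsometry F.subtypeₗᵢ, hg, rfl⟩
  calc (∑ i, ‖inner ℂ (g i) ((T ∘L A) (e i))‖ ^ p) ^ (1 / p)
      = (∑ i, ‖((c / 2 : ℝ) : ℂ) * (inner ℂ (g i) (T (U (e' i))) +
          inner ℂ (g i) (T (W (e' i))))‖ ^ p) ^ (1 / p) := by
        simp only [ContinuousLinearMap.comp_apply, hAe, map_smul, map_add, inner_smul_right,
          inner_add_right]
    _ ≤ ‖((c / 2 : ℝ) : ℂ)‖ * (schattenNorm p T + schattenNorm p T) :=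
        (rpow_sum_norm_mul_add_le _ hp _ _ _).trans (by gcongr <;> assumption)
    _ = c * schattenNorm p T := by
        rw [Complex.norm_real, Real.norm_of_nonneg (by positivity)]
        ring

theorem MemSchatten.comp (hT : MemSchatten p T) (hp : 1 ≤ p) (hc : 0 < c) (hA : ‖A‖ ≤ c) :
    MemSchatten p (T ∘L A) :=
  ⟨c * schattenNorm p T, fun _ => le_mul_schattenNorm_of_mem_schattenSet_comp hp hT hc hA⟩

theorem schattenNorm_comp_le (hp : 1 ≤ p) (hT : MemSchatten p T) (hc : 0 < c) (hA : ‖A‖ ≤ c) :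
    schattenNorm p (T ∘L A) ≤ c * schattenNorm p T :=
  csSup_le ⟨0, zero_mem_schattenSet (by positivity) _⟩ fun _ =>
    le_mul_schattenNorm_of_mem_schattenSet_comp hp hT hc hA

end SchattenIdeal

lemma norm_sub_I_smul_sq {x y : E} (h : inner ℂ x y = inner ℂ y x) :
    ‖x - I • y‖ ^ 2 = ‖x‖ ^ 2 + ‖y‖ ^ 2 := by
  have him : (inner ℂ x y).im = 0 :=
    Complex.conj_eq_iff_im.mp ((inner_conj_symm y x).trans h.symm)
  rw [norm_sub_sq (𝕜 := ℂ), inner_smul_right, norm_smul, Complex.norm_I, one_mul]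
  simp [him]

end ComplexInnerProductSpace

lemma IsSelfAdjoint.isFormalAdjoint {𝕜 E : Type*} [RCLike 𝕜] [NormedAddCommGroup E]
    [InnerProductSpace 𝕜 E] [CompleteSpace E] {H : E →ₗ.[𝕜] E} (hH : IsSelfAdjoint H) :
    H.IsFormalAdjoint H := by
  have h := LinearPMap.adjoint_isFormalAdjoint hH.dense_domain
  rwa [LinearPMap.isSelfAdjoint_def.mp hH] at h

section Perturbation

variable {E : Type*} [NormedAddCommGroup E] [InnerProductSpace ℂ E] {H V : E →ₗ.[ℂ] E}
  (hdom : H.domain ≤ V.domain)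

lemma norm_le_of_add_smul_sub_I_smul_eq (hH : H.IsFormalAdjoint H) (hV : V.IsFormalAdjoint V)
    (t : ℝ) {φ : H.domain} {ψ : E}
    (hφ : H φ + (t : ℂ) • V ⟨φ, hdom φ.2⟩ - I • (φ : E) = ψ) :
    ‖H φ + (t : ℂ) • V ⟨φ, hdom φ.2⟩‖ ≤ ‖ψ‖ ∧ ‖(φ : E)‖ ≤ ‖ψ‖ := by
  have hreal : inner ℂ (H φ + (t : ℂ) • V ⟨φ, hdom φ.2⟩) (φ : E) =
      inner ℂ (φ : E) (H φ + (t : ℂ) • V ⟨φ, hdom φ.2⟩) := by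
    rw [inner_add_left, inner_add_right, inner_smul_left, inner_smul_right, hH φ φ,
      hV ⟨φ, hdom φ.2⟩ ⟨φ, hdom φ.2⟩, Complex.conj_ofReal]
  have hpyth := norm_sub_I_smul_sq hreal
  rw [hφ] at hpyth
  constructor <;> refine (sq_le_sq₀ (norm_nonneg _) (norm_nonneg _)).mp ?_ <;>
    nlinarith [sq_nonneg ‖(φ : E)‖, sq_nonneg ‖H φ + (t : ℂ) • V ⟨φ, hdom φ.2⟩‖]

lemma norm_apply_le_of_add_smul_sub_I_smul_eq (hH : H.IsFormalAdjoint H)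
    (hV : V.IsFormalAdjoint V) {a b t : ℝ} (ha0 : 0 ≤ a) (ha : a < 1) (hb : 0 ≤ b)
    (ht0 : 0 ≤ t) (ht1 : t ≤ 1)
    (hbound : ∀ φ : H.domain, ‖V ⟨φ, hdom φ.2⟩‖ ≤ a * ‖H φ‖ + b * ‖(φ : E)‖)
    {φ : H.domain} {ψ : E} (hφ : H φ + (t : ℂ) • V ⟨φ, hdom φ.2⟩ - I • (φ : E) = ψ) :
    ‖V ⟨φ, hdom φ.2⟩‖ ≤ (a + b) / (1 - a) * ‖ψ‖ := by
  obtain ⟨hK, hφψ⟩ := norm_le_of_add_smul_sub_I_smul_eq hdom hH hV t hφ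
  have hHφ : ‖H φ‖ ≤ ‖ψ‖ + t * ‖V ⟨φ, hdom φ.2⟩‖ := by
    calc ‖H φ‖ = ‖(H φ + (t : ℂ) • V ⟨φ, hdom φ.2⟩) - (t : ℂ) • V ⟨φ, hdom φ.2⟩‖ := by
          rw [add_sub_cancel_right]
      _ ≤ ‖ψ‖ + t * ‖V ⟨φ, hdom φ.2⟩‖ := by
          grw [norm_sub_le, hK, norm_smul, Complex.norm_real, Real.norm_of_nonneg ht0]
  have hVφ := hbound φ
  rw [div_mul_eq_mul_div, le_div_iff₀ (by linarith)]
  nlinarith [norm_nonneg (V ⟨φ, hdom φ.2⟩), mul_le_mul_of_nonneg_left hHφ ha0,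
    mul_le_mul_of_nonneg_left hφψ hb, mul_nonneg (mul_nonneg ha0 (sub_nonneg.2 ht1))
      (norm_nonneg (V ⟨φ, hdom φ.2⟩))]

lemma apply_sub_smul_eq_of_add_smul_sub_I_smul_eq (R : E → E)
    (hR : ∀ φ : H.domain, R (H φ - I • (φ : E)) = φ) (t : ℝ) {φ : H.domain} {ψ : E}
    (hφ : H φ + (t : ℂ) • V ⟨φ, hdom φ.2⟩ - I • (φ : E) = ψ) :
    R (ψ - (t : ℂ) • V ⟨φ, hdom φ.2⟩) = φ := by
  rw [← hφ]
  convert hR φ using 2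
  abel

end Perturbation

theorem schatten_bound_shifted_resolvent_general
    (H V : ℋ →ₗ.[ℂ] ℋ) (hH : IsSelfAdjoint H)
    (hdom : H.domain ≤ V.domain)
    (hsymm : ∀ x y : V.domain, (inner ℂ (V x) (y : ℋ) : ℂ) = inner ℂ (x : ℋ) (V y))
    (a b : ℝ) (ha0 : 0 ≤ a) (ha : a < 1) (hb : 0 ≤ b)
    (hbound : ∀ ψ : H.domain, ‖V ⟨(ψ : ℋ), hdom ψ.2⟩‖ ≤ a * ‖H ψ‖ + b * ‖(ψ : ℋ)‖)
    (n : ℕ) (hn : 1 ≤ n)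
    (R : ℋ →L[ℂ] ℋ)
    (hR3 : ∀ φ : H.domain, R (H φ - I • (φ : ℋ)) = (φ : ℋ))
    -- the operators `V(H-i)^{-p}` and the hypothesis `V(H-i)^{-p} ∈ 𝒮^{n/p}`, `p = 1,…,n`
    (hmemp : ∀ p : ℕ, 1 ≤ p → ∀ ψ : ℋ, (⇑R)^[p] ψ ∈ V.domain)
    (VRp : ℕ → (ℋ →L[ℂ] ℋ))
    (hVRp : ∀ (p : ℕ) (hp : 1 ≤ p), p ≤ n →
      ∀ ψ : ℋ, VRp p ψ = V ⟨(⇑R)^[p] ψ, hmemp p hp ψ⟩)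
    (hSch : ∀ p : ℕ, 1 ≤ p → p ≤ n → MemSchatten ((n : ℝ) / (p : ℝ)) (VRp p))
    -- `H_t = H + tV` and its resolvent
    (t : ℝ) (ht0 : 0 ≤ t) (ht1 : t ≤ 1)
    (Rt : ℋ →L[ℂ] ℋ) (hRt1 : ∀ ψ : ℋ, Rt ψ ∈ H.domain)
    (hRt2 : ∀ ψ : ℋ,
      H ⟨Rt ψ, hRt1 ψ⟩ + (t : ℂ) • V ⟨Rt ψ, hdom (hRt1 ψ)⟩ - I • Rt ψ = ψ)
    (VRt : ℋ →L[ℂ] ℋ) (hVRt : ∀ ψ : ℋ, VRt ψ = V ⟨Rt ψ, hdom (hRt1 ψ)⟩) :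
    MemSchatten (n : ℝ) VRt ∧
      schattenNorm (n : ℝ) VRt ≤ ((1 + b) / (1 - a)) * schattenNorm (n : ℝ) (VRp 1) := by
  have ha1 : 0 < 1 - a := by linarith
  have hVRt_le : ‖VRt‖ ≤ (a + b) / (1 - a) :=
    VRt.opNorm_le_bound (by positivity) fun ψ => by
      rw [hVRt]
      exact norm_apply_le_of_add_smul_sub_I_smul_eq hdom hH.isFormalAdjoint hsymm ha0 ha hb ht0
        ht1 hbound (hRt2 ψ)
  set A := ContinuousLinearMap.id ℂ ℋ - (t : ℂ) • VRt
  have hA : ‖A‖ ≤ (1 + b) / (1 - a) :=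
    calc ‖A‖ ≤ 1 + t * ‖VRt‖ := by
          grw [norm_sub_le, ContinuousLinearMap.norm_id_le, norm_smul, Complex.norm_real,
            Real.norm_of_nonneg ht0]
      _ ≤ 1 + 1 * ((a + b) / (1 - a)) := by gcongr
      _ = (1 + b) / (1 - a) := by field_simp; ring
  have hc : 0 < (1 + b) / (1 - a) := by positivity
  have hVRt_eq : VRt = VRp 1 ∘L A := by
    ext ψ
    rw [ContinuousLinearMap.comp_apply, hVRp 1 le_rfl hn, hVRt]
    congr 2
    change Rt ψ = R (ψ - (t : ℂ) • VRt ψ)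
    rw [hVRt, apply_sub_smul_eq_of_add_smul_sub_I_smul_eq hdom R hR3 t (hRt2 ψ)]
  have hT : MemSchatten n (VRp 1) := by simpa using hSch 1 le_rfl hn
  have hp : (1 : ℝ) ≤ n := by exact_mod_cast hn
  rw [hVRt_eq]
  exact ⟨hT.comp hp hc hA, schattenNorm_comp_le hp hT hc hA⟩

/-- Let `H` be self-adjoint on `ℋ`, `V` symmetric with
`‖Vψ‖ ≤ a‖Hψ‖ + b‖ψ‖` on `dom H`, `a < 1`, and `V(H-i)^{-p} ∈ 𝒮^{n/p}` for `p = 1,…,n`.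
For `t ∈ [0,1]` and `H_t = H + tV` (with resolvent `R_t = (H_t - i)⁻¹`), the operator
`V(H_t - i)⁻¹` belongs to `𝒮ⁿ` with
`‖V(H_t - i)⁻¹‖_n ≤ ((1+b)/(1-a))·‖V(H-i)⁻¹‖_n`. -/
theorem schatten_bound_shifted_resolvent
    (H V : ℋ →ₗ.[ℂ] ℋ) (hH : IsSelfAdjoint H)
    (hdom : H.domain ≤ V.domain)
    (hsymm : ∀ x y : V.domain, (inner ℂ (V x) (y : ℋ) : ℂ) = inner ℂ (x : ℋ) (V y))
    (a b : ℝ) (ha0 : 0 ≤ a) (ha : a < 1) (hb : 0 ≤ b)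
    (hbound : ∀ ψ : H.domain, ‖V ⟨(ψ : ℋ), hdom ψ.2⟩‖ ≤ a * ‖H ψ‖ + b * ‖(ψ : ℋ)‖)
    (n : ℕ) (hn : 1 ≤ n)
    (R : ℋ →L[ℂ] ℋ) (hR1 : ∀ ψ : ℋ, R ψ ∈ H.domain)
    (hR2 : ∀ ψ : ℋ, H ⟨R ψ, hR1 ψ⟩ - I • R ψ = ψ)
    (hR3 : ∀ φ : H.domain, R (H φ - I • (φ : ℋ)) = (φ : ℋ))
    -- the operators `V(H-i)^{-p}` and the hypothesis `V(H-i)^{-p} ∈ 𝒮^{n/p}`, `p = 1,…,n`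
    (hmemp : ∀ p : ℕ, 1 ≤ p → ∀ ψ : ℋ, (⇑R)^[p] ψ ∈ V.domain)
    (VRp : ℕ → (ℋ →L[ℂ] ℋ))
    (hVRp : ∀ (p : ℕ) (hp : 1 ≤ p), p ≤ n →
      ∀ ψ : ℋ, VRp p ψ = V ⟨(⇑R)^[p] ψ, hmemp p hp ψ⟩)
    (hSch : ∀ p : ℕ, 1 ≤ p → p ≤ n → MemSchatten ((n : ℝ) / (p : ℝ)) (VRp p))
    -- `H_t = H + tV` and its resolvent
    (t : ℝ) (ht0 : 0 ≤ t) (ht1 : t ≤ 1)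
    (Rt : ℋ →L[ℂ] ℋ) (hRt1 : ∀ ψ : ℋ, Rt ψ ∈ H.domain)
    (hRt2 : ∀ ψ : ℋ,
      H ⟨Rt ψ, hRt1 ψ⟩ + (t : ℂ) • V ⟨Rt ψ, hdom (hRt1 ψ)⟩ - I • Rt ψ = ψ)
    (hRt3 : ∀ φ : H.domain,
      Rt (H φ + (t : ℂ) • V ⟨(φ : ℋ), hdom φ.2⟩ - I • (φ : ℋ)) = (φ : ℋ))
    (VRt : ℋ →L[ℂ] ℋ) (hVRt : ∀ ψ : ℋ, VRt ψ = V ⟨Rt ψ, hdom (hRt1 ψ)⟩) :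
    MemSchatten (n : ℝ) VRt ∧
      schattenNorm (n : ℝ) VRt ≤ ((1 + b) / (1 - a)) * schattenNorm (n : ℝ) (VRp 1) :=
  schatten_bound_shifted_resolvent_general H V hH hdom hsymm a b ha0 ha hb hbound n hn R hR3 hmemp
    VRp hVRp hSch t ht0 ht1 Rt hRt1 hRt2 VRt hVRt
end

section
/- For all integers 0 ≤ m ≤ k and 0 ≤ l ≤ k, the inequality (1/(m!·(k-2m)!))·√((k+l-2m)!) ≤ C·D^k·binom(k, 2m) holds for absolute constants C, D > 0, whenever 2m ≤ k. -/
open Nat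

lemma my_choose_le_two_pow (n k : ℕ) : n.choose k ≤ 2 ^ n := by
  rcases le_or_gt k n with h | h
  · calc n.choose k ≤ ∑ i ∈ Finset.range (n + 1), n.choose i :=
          Finset.single_le_sum (fun _ _ => Nat.zero_le _)
            (Finset.mem_range.mpr (Nat.lt_succ_of_le h))
      _ = 2 ^ n := Nat.sum_range_choose n
  · rw [Nat.choose_eq_zero_of_lt h]; exact Nat.zero_le _

lemma my_factorial_two_mul (n : ℕ) : (2 * n).factorial ≤ 4 ^ n * n.factorial * n.factorial := by
  have h := Nat.choose_mul_factorial_mul_factorial (show n ≤ 2 * n by omega)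
  have h2 : 2 * n - n = n := by omega
  rw [h2] at h
  calc (2 * n).factorial = (2 * n).choose n * n.factorial * n.factorial := h.symm
    _ ≤ 2 ^ (2 * n) * n.factorial * n.factorial := by
        gcongr; exact my_choose_le_two_pow _ _
    _ = 4 ^ n * n.factorial * n.factorial := by
        rw [pow_mul]; norm_num

/-- There are absolute constants `C, D > 0` such that for all integers
`0 ≤ m`, `l ≤ k` with `2m ≤ k`,
`(1/(m!·(k-2m)!))·√((k+l-2m)!) ≤ C·D^k·binom(k, 2m)`. -/
theorem factorial_sqrt_estimate :
    ∃ C D : ℝ, 0 < C ∧ 0 < D ∧ ∀ k m l : ℕ, 2 * m ≤ k → l ≤ k →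
      (1 / ((m.factorial : ℝ) * ((k - 2 * m).factorial : ℝ))) *
          Real.sqrt ((k + l - 2 * m).factorial : ℝ)
        ≤ C * D ^ k * (k.choose (2 * m) : ℝ) := by
  refine ⟨1, 4, one_pos, by norm_num, fun k m l hm hl => ?_⟩
  set n := k - m with hn
  have hmn : m ≤ n := by omega
  -- √((k+l-2m)!) ≤ 2^n * n!
  have h1 : ((k + l - 2 * m).factorial : ℝ) ≤ ((2 * n).factorial : ℝ) := by
    exact_mod_cast Nat.factorial_le (show k + l - 2 * m ≤ 2 * n by omega)
  have hsq : Real.sqrt ((k + l - 2 * m).factorial : ℝ) ≤ 2 ^ n * (n.factorial : ℝ) := by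
    have h2 : ((2 * n).factorial : ℝ) ≤ (2 ^ n * (n.factorial : ℝ)) ^ 2 := by
      have := my_factorial_two_mul n
      have : ((2 * n).factorial : ℝ) ≤ 4 ^ n * n.factorial * n.factorial := by
        exact_mod_cast this
      calc ((2 * n).factorial : ℝ) ≤ 4 ^ n * n.factorial * n.factorial := this
        _ = (2 ^ n * (n.factorial : ℝ)) ^ 2 := by ring_nf; rw [show (4:ℝ) = 2^2 by norm_num, ← pow_mul]; ring_nf
    calc Real.sqrt ((k + l - 2 * m).factorial : ℝ)
        ≤ Real.sqrt ((2 ^ n * (n.factorial : ℝ)) ^ 2) := Real.sqrt_le_sqrt (h1.trans h2)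
      _ = 2 ^ n * (n.factorial : ℝ) := Real.sqrt_sq (by positivity)
  -- n! = choose n m * m! * (k-2m)!
  have h3 : (n.factorial : ℝ) = (n.choose m : ℝ) * m.factorial * (k - 2 * m).factorial := by
    have h := Nat.choose_mul_factorial_mul_factorial hmn
    have h4 : n - m = k - 2 * m := by omega
    rw [h4] at h
    exact_mod_cast h.symm
  have h5 : (n.choose m : ℝ) ≤ 2 ^ n := by exact_mod_cast my_choose_le_two_pow n m
  have hchoose : (1 : ℝ) ≤ (k.choose (2 * m) : ℝ) := by
    exact_mod_cast Nat.one_le_iff_ne_zero.mpr (Nat.choose_pos hm).ne'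
  have hpos : (0 : ℝ) < (m.factorial : ℝ) * ((k - 2 * m).factorial : ℝ) := by positivity
  rw [div_mul_eq_mul_div, one_mul, div_le_iff₀ hpos]
  calc Real.sqrt ((k + l - 2 * m).factorial : ℝ)
      ≤ 2 ^ n * (n.factorial : ℝ) := hsq
    _ = 2 ^ n * ((n.choose m : ℝ) * m.factorial * (k - 2 * m).factorial) := by rw [h3]
    _ ≤ 2 ^ n * (2 ^ n * m.factorial * (k - 2 * m).factorial) := by
        gcongr
    _ = (2 ^ n * 2 ^ n) * (m.factorial * (k - 2 * m).factorial) := by ring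
    _ ≤ (4 : ℝ) ^ k * (m.factorial * (k - 2 * m).factorial) := by
        gcongr ?_ * _
        calc (2:ℝ) ^ n * 2 ^ n = 4 ^ n := by rw [show (4:ℝ) = 2*2 by norm_num, mul_pow]
          _ ≤ 4 ^ k := by
              gcongr
              · norm_num
              · omega
    _ = 1 * 4 ^ k * 1 * (m.factorial * (k - 2 * m).factorial) := by ring
    _ ≤ 1 * 4 ^ k * (k.choose (2 * m) : ℝ) * (m.factorial * (k - 2 * m).factorial) := by
        gcongr
    _ = 1 * 4 ^ k * (k.choose (2 * m) : ℝ) * ((m.factorial : ℝ) * ((k - 2 * m).factorial : ℝ)) := rfl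
end

section
/- Let f(x) = e^{-x²}. Then for every n ∈ ℕ, (f·u^n)^{(n)}(x) = n! Σ_{k=0}^n binom(n,k) Σ_{l=0}^k binom(k,l) Σ_{m=0}^{⌊k/2⌋} ((-i)^{k-l}(-1)^{m+k}/(m!(k-2m)!)) x^l (2x)^{k-2m} e^{-x²}, where u(x) = x - i. -/
/-!
By Leibniz' rule, `(f uⁿ)⁽ⁿ⁾ = ∑ₖ C(n,k) f⁽ᵏ⁾ (uⁿ)⁽ⁿ⁻ᵏ⁾` with `(uⁿ)⁽ⁿ⁻ᵏ⁾ = (n!/k!) uᵏ`.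
The Gaussian satisfies `f⁽ᵏ⁾ = Pₖ f` with `Pₖ₊₁ = Pₖ' - 2x Pₖ`, and the Hermite coefficients
`(-1)^(m+k) k!/(m!(k-2m)!)` of `(2x)^(k-2m)` obey the matching recursion
`c(k+1,m+1) = 2(k-2m) c(k,m) - c(k,m+1)`. Expanding `uᵏ = (x - i)ᵏ` binomially finishes.
Everything is computed for entire functions on `ℂ` and then restricted to `ℝ`.
-/

open Complex Finset
open scoped Nat

theorem Nat.succ_descFactorial_succ_eq_add (n k : ℕ) :
    (n + 1).descFactorial (k + 1) = n.descFactorial (k + 1) + (k + 1) * n.descFactorial k := by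
  rw [succ_descFactorial_succ, descFactorial_succ]
  rcases le_or_gt k n with hkn | hnk
  · obtain ⟨t, rfl⟩ := Nat.exists_eq_add_of_le hkn
    rw [Nat.add_sub_cancel_left]
    ring
  · simp [descFactorial_of_lt hnk]

theorem iteratedDeriv_comp_ofReal {f : ℂ → ℂ} (hf : Differentiable ℂ f) (k : ℕ) (x : ℝ) :
    iteratedDeriv k (fun y : ℝ => f y) x = iteratedDeriv k f x := by
  induction k generalizing x with
  | zero => simp
  | succ k ih =>
    rw [iteratedDeriv_succ, funext ih, iteratedDeriv_succ]
    exact ((hf.contDiff (n := ⊤)).differentiable_iteratedDeriv k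
      (WithTop.coe_lt_top _) x).hasDerivAt.comp_ofReal.deriv

section Leibniz

variable {𝕜 : Type*} [NontriviallyNormedField 𝕜]

theorem iteratedDeriv_sub_const_pow (c : 𝕜) (n k : ℕ) (z : 𝕜) :
    iteratedDeriv k (fun z => (z - c) ^ n) z = n.descFactorial k * (z - c) ^ (n - k) := by
  simp [iteratedDeriv_comp_sub_const (f := (· ^ n))]

theorem iteratedDeriv_mul_sub_pow {f : 𝕜 → 𝕜} {n : ℕ} {z : 𝕜} (hf : ContDiffAt 𝕜 n f z)
    (c : 𝕜) :
    iteratedDeriv n (fun y => f y * (y - c) ^ n) z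
      = ∑ k ∈ range (n + 1),
          n.choose k * iteratedDeriv k f z * (n.descFactorial (n - k) * (z - c) ^ k) := by
  rw [iteratedDeriv_fun_mul hf (by fun_prop)]
  refine sum_congr rfl fun k hk => ?_
  rw [iteratedDeriv_sub_const_pow, Nat.sub_sub_self (Nat.lt_succ_iff.mp (mem_range.mp hk))]

end Leibniz

/-- Equals `(-1)^(m+k) k!/(m!(k-2m)!)` for `2m ≤ k`; `descFactorial` makes it vanish for `2m > k`. -/
noncomputable def gaussianDerivCoeff (k m : ℕ) : ℂ :=
  (-1) ^ (m + k) * k.descFactorial (2 * m) / m !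

theorem gaussianDerivCoeff_zero_right (k : ℕ) : gaussianDerivCoeff k 0 = (-1) ^ k := by
  simp [gaussianDerivCoeff]

theorem gaussianDerivCoeff_of_lt {k m : ℕ} (h : k < 2 * m) : gaussianDerivCoeff k m = 0 := by
  simp [gaussianDerivCoeff, Nat.descFactorial_of_lt h]

theorem gaussianDerivCoeff_of_le {k m : ℕ} (h : 2 * m ≤ k) :
    gaussianDerivCoeff k m = k ! * ((-1) ^ (m + k) / (m ! * (k - 2 * m)!)) := by
  have : ((k - 2 * m)! : ℂ) ≠ 0 := Nat.cast_ne_zero.2 (Nat.factorial_ne_zero _)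
  rw [gaussianDerivCoeff, ← Nat.factorial_mul_descFactorial h, Nat.cast_mul]
  field_simp

theorem gaussianDerivCoeff_succ_succ (k m : ℕ) :
    gaussianDerivCoeff (k + 1) (m + 1)
      = 2 * (k - 2 * m : ℕ) * gaussianDerivCoeff k m - gaussianDerivCoeff k (m + 1) := by
  have hD : (k + 1).descFactorial (2 * (m + 1))
      = k.descFactorial (2 * (m + 1)) + 2 * (m + 1) * ((k - 2 * m) * k.descFactorial (2 * m)) := by
    rw [show 2 * (m + 1) = 2 * m + 1 + 1 by ring, Nat.succ_descFactorial_succ_eq_add,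
      Nat.descFactorial_succ k (2 * m)]
  simp only [gaussianDerivCoeff, hD, Nat.factorial_succ]
  push_cast
  field_simp
  ring

theorem gaussianDerivCoeff_succ_succ_mul_pow (k m : ℕ) (w : ℂ) :
    gaussianDerivCoeff (k + 1) (m + 1) * w ^ (k + 1 - 2 * (m + 1))
      = gaussianDerivCoeff k m * ((k - 2 * m : ℕ) * w ^ (k - 2 * m - 1) * 2)
        - w * (gaussianDerivCoeff k (m + 1) * w ^ (k - 2 * (m + 1))) := by
  rw [gaussianDerivCoeff_succ_succ, show k + 1 - 2 * (m + 1) = k - 2 * m - 1 by omega]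
  rcases le_or_gt (2 * (m + 1)) k with h | h
  · rw [show k - 2 * m - 1 = k - 2 * (m + 1) + 1 by omega]
    ring
  · rw [gaussianDerivCoeff_of_lt h]
    ring

/-- The polynomial recursion `Pₖ₊₁(z) = Pₖ'(z) - 2z Pₖ(z)`, written in the variable `w = 2z`. -/
theorem sum_gaussianDerivCoeff_succ (k : ℕ) (w : ℂ) :
    ∑ m ∈ range (k + 2), gaussianDerivCoeff (k + 1) m * w ^ (k + 1 - 2 * m)
      = ∑ m ∈ range (k + 1), gaussianDerivCoeff k m * ((k - 2 * m : ℕ) * w ^ (k - 2 * m - 1) * 2)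
        - w * ∑ m ∈ range (k + 1), gaussianDerivCoeff k m * w ^ (k - 2 * m) := by
  have hlast : gaussianDerivCoeff k (k + 1) = 0 := gaussianDerivCoeff_of_lt (by omega)
  have hshift : ∑ m ∈ range (k + 1), gaussianDerivCoeff k m * w ^ (k - 2 * m)
      = ∑ m ∈ range (k + 1), gaussianDerivCoeff k (m + 1) * w ^ (k - 2 * (m + 1))
        + gaussianDerivCoeff k 0 * w ^ (k - 2 * 0) := by
    rw [← sum_range_succ' (fun m => gaussianDerivCoeff k m * w ^ (k - 2 * m)),
      sum_range_succ _ (k + 1), hlast, zero_mul, add_zero]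
  rw [sum_range_succ', sum_congr rfl fun m _ => gaussianDerivCoeff_succ_succ_mul_pow k m w,
    sum_sub_distrib, ← mul_sum, hshift, gaussianDerivCoeff_zero_right,
    gaussianDerivCoeff_zero_right, Nat.mul_zero, Nat.sub_zero, Nat.sub_zero]
  ring

theorem iteratedDeriv_cexp_neg_sq_eq_sum (k : ℕ) (z : ℂ) :
    iteratedDeriv k (fun z : ℂ => cexp (-z ^ 2)) z
      = (∑ m ∈ range (k + 1), gaussianDerivCoeff k m * (2 * z) ^ (k - 2 * m)) * cexp (-z ^ 2) := by
  induction k generalizing z with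
  | zero => simp [gaussianDerivCoeff]
  | succ k ih =>
    have hpoly : HasDerivAt
        (fun z => ∑ m ∈ range (k + 1), gaussianDerivCoeff k m * (2 * z) ^ (k - 2 * m))
        (∑ m ∈ range (k + 1),
          gaussianDerivCoeff k m * ((k - 2 * m : ℕ) * (2 * z) ^ (k - 2 * m - 1) * 2)) z := by
      refine HasDerivAt.fun_sum fun m _ => ?_
      simpa using (((hasDerivAt_id z).const_mul (2 : ℂ)).pow (k - 2 * m)).const_mul
        (gaussianDerivCoeff k m)
    have hexp : HasDerivAt (fun z : ℂ => cexp (-z ^ 2)) (cexp (-z ^ 2) * (-(2 * z))) z := by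
      simpa using ((hasDerivAt_id z).pow 2).neg.cexp
    rw [iteratedDeriv_succ, funext ih, (hpoly.fun_mul hexp).deriv, sum_gaussianDerivCoeff_succ]
    ring

theorem iteratedDeriv_cexp_neg_sq (k : ℕ) (z : ℂ) :
    iteratedDeriv k (fun z : ℂ => cexp (-z ^ 2)) z
      = k ! * ∑ m ∈ range (k / 2 + 1),
          (-1) ^ (m + k) / (m ! * (k - 2 * m)!) * (2 * z) ^ (k - 2 * m) * cexp (-z ^ 2) := by
  have hvanish : ∀ m ∈ range (k + 1), m ∉ range (k / 2 + 1) →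
      gaussianDerivCoeff k m * (2 * z) ^ (k - 2 * m) = 0 := fun m _ hm => by
    rw [gaussianDerivCoeff_of_lt (by simp at hm; omega), zero_mul]
  rw [iteratedDeriv_cexp_neg_sq_eq_sum,
    ← sum_subset (range_subset_range.2 (by omega)) hvanish, sum_mul, mul_sum]
  refine sum_congr rfl fun m hm => ?_
  rw [gaussianDerivCoeff_of_le (by simp at hm; omega)]
  ring

/-- For `f(x) = e^{-x²}` and `u(x) = x - i`, the `n`-th derivative of
`f·uⁿ` has the explicit Hermite-polynomial expansion
`(f·uⁿ)^{(n)}(x) = n! Σ_{k=0}^n C(n,k) Σ_{l=0}^k C(k,l) Σ_{m=0}^{⌊k/2⌋}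
  ((-i)^{k-l}(-1)^{m+k}/(m!(k-2m)!)) x^l (2x)^{k-2m} e^{-x²}`. -/
theorem gaussian_u_pow_iteratedDeriv (n : ℕ) (x : ℝ) :
    iteratedDeriv n (fun y : ℝ => Complex.exp (-(y : ℂ) ^ 2) * ((y : ℂ) - I) ^ n) x
      = (n.factorial : ℂ) *
        ∑ k ∈ range (n + 1), (n.choose k : ℂ) *
          ∑ l ∈ range (k + 1), (k.choose l : ℂ) *
            ∑ m ∈ range (k / 2 + 1),
              ((-I) ^ (k - l) * (-1 : ℂ) ^ (m + k) /
                  ((m.factorial : ℂ) * ((k - 2 * m).factorial : ℂ))) *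
                (x : ℂ) ^ l * (2 * (x : ℂ)) ^ (k - 2 * m) * Complex.exp (-(x : ℂ) ^ 2) := by
  rw [iteratedDeriv_comp_ofReal (f := fun z : ℂ => cexp (-z ^ 2) * (z - I) ^ n) (by fun_prop),
    iteratedDeriv_mul_sub_pow (by fun_prop), mul_sum]
  refine sum_congr rfl fun k hk => ?_
  have hfact : (n ! : ℂ) = k ! * n.descFactorial (n - k) := by
    rw [← Nat.factorial_mul_descFactorial (Nat.sub_le n k),
      Nat.sub_sub_self (Nat.lt_succ_iff.mp (mem_range.mp hk)), Nat.cast_mul]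
  have hbinom : (∑ m ∈ range (k / 2 + 1),
        (-1) ^ (m + k) / (m ! * (k - 2 * m)!) * (2 * (x : ℂ)) ^ (k - 2 * m) * cexp (-(x : ℂ) ^ 2))
        * ((x : ℂ) - I) ^ k
      = ∑ l ∈ range (k + 1), (k.choose l : ℂ) * ∑ m ∈ range (k / 2 + 1),
          ((-I) ^ (k - l) * (-1 : ℂ) ^ (m + k) / (m ! * (k - 2 * m)!)) *
            (x : ℂ) ^ l * (2 * (x : ℂ)) ^ (k - 2 * m) * cexp (-(x : ℂ) ^ 2) := by
    rw [sub_eq_add_neg, add_pow, mul_sum]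
    refine sum_congr rfl fun l _ => ?_
    rw [sum_mul, mul_sum]
    refine sum_congr rfl fun m _ => ?_
    ring
  rw [iteratedDeriv_cexp_neg_sq, hfact, ← hbinom]
  ring
end
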